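/- arXiv:1101.3475 — 9 statements merged into one kernel-verified Lean document; each statement's English description precedes it below -/
import Mathlib

section
/- The forward shift is commutative on [t₀,∞) ∩ 𝕋: for all (u,t) ∈ (([t₀,∞) ∩ 𝕋) × ([t₀,∞) ∩ 𝕋)) ∩ D₊ one has (t,u) ∈ D₊ and δ₊(u,t) = δ₊(t,u). -/
/-- The domain of a shift operator `δ` on the time scale `T` with subset `Tstar`
and initial point `t0`: pairs `(s, t)` with `s ∈ [t0, ∞) ∩ T`, `t ∈ Tstar`, and
`δ s t ∈ Tstar`. -/
def SDom (T Tstar : Set ℝ) (t0 : ℝ) (δ : ℝ → ℝ → ℝ) : Set (ℝ × ℝ) :=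
  {p : ℝ × ℝ | p.1 ∈ T ∧ t0 ≤ p.1 ∧ p.2 ∈ Tstar ∧ δ p.1 p.2 ∈ Tstar}

/-
Since `δ₋(t, t) = δ₋(t, δ₊(t, t₀)) = t₀`, the compatibility (P5) of the two shifts gives
`δ₋(t, δ₊(u, t)) = δ₊(u, δ₋(t, t)) = δ₊(u, t₀) = u`; applying `δ₊(t, ·)` and (P4) yields
`δ₊(t, u) = δ₊(u, t)`.
-/

section ShiftOperators

variable {T Tstar : Set ℝ} {t0 : ℝ} {δm δp : ℝ → ℝ → ℝ}

theorem backward_shift_self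
    (P3a : ∀ t, t ∈ T → t0 ≤ t → (t, t0) ∈ SDom T Tstar t0 δp ∧ δp t t0 = t)
    (P4p : ∀ s t, (s, t) ∈ SDom T Tstar t0 δp →
        (s, δp s t) ∈ SDom T Tstar t0 δm ∧ δm s (δp s t) = t)
    {t : ℝ} (ht : t ∈ T) (htt0 : t0 ≤ t) :
    (t, t) ∈ SDom T Tstar t0 δm ∧ δm t t = t0 := by
  obtain ⟨hdom, heq⟩ := P3a t ht htt0
  simpa only [heq] using P4p t t0 hdom

theorem backward_shift_forward_shift_swap
    (P3a : ∀ t, t ∈ T → t0 ≤ t → (t, t0) ∈ SDom T Tstar t0 δp ∧ δp t t0 = t)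
    (P4p : ∀ s t, (s, t) ∈ SDom T Tstar t0 δp →
        (s, δp s t) ∈ SDom T Tstar t0 δm ∧ δm s (δp s t) = t)
    (P5m : ∀ s t u, (s, t) ∈ SDom T Tstar t0 δm → (u, δm s t) ∈ SDom T Tstar t0 δp →
        (s, δp u t) ∈ SDom T Tstar t0 δm ∧ δp u (δm s t) = δm s (δp u t))
    {u t : ℝ} (hu : u ∈ T) (hut0 : t0 ≤ u) (ht : t ∈ T) (htt0 : t0 ≤ t) :
    (t, δp u t) ∈ SDom T Tstar t0 δm ∧ δm t (δp u t) = u := by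
  obtain ⟨hself, hself_eq⟩ := backward_shift_self P3a P4p ht htt0
  obtain ⟨hu_dom, hu_eq⟩ := P3a u hu hut0
  obtain ⟨hdom, heq⟩ := P5m t t u hself (hself_eq ▸ hu_dom)
  rw [hself_eq, hu_eq] at heq
  exact ⟨hdom, heq.symm⟩

end ShiftOperators

theorem stmt2_general
    (T Tstar : Set ℝ) (t0 : ℝ) (δm δp : ℝ → ℝ → ℝ)
    -- (P3)
    (P3a : ∀ t, t ∈ T → t0 ≤ t → (t, t0) ∈ SDom T Tstar t0 δp ∧ δp t t0 = t)
    -- (P4)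
    (P4p : ∀ s t, (s, t) ∈ SDom T Tstar t0 δp →
        (s, δp s t) ∈ SDom T Tstar t0 δm ∧ δm s (δp s t) = t)
    (P4m : ∀ s t, (s, t) ∈ SDom T Tstar t0 δm →
        (s, δm s t) ∈ SDom T Tstar t0 δp ∧ δp s (δm s t) = t)
    -- (P5)
    (P5m : ∀ s t u, (s, t) ∈ SDom T Tstar t0 δm → (u, δm s t) ∈ SDom T Tstar t0 δp →
        (s, δp u t) ∈ SDom T Tstar t0 δm ∧ δp u (δm s t) = δm s (δp u t))
    :
    ∀ u t, u ∈ T → t0 ≤ u → t ∈ T → t0 ≤ t → (u, t) ∈ SDom T Tstar t0 δp →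
      (t, u) ∈ SDom T Tstar t0 δp ∧ δp u t = δp t u := by
  intro u t hu hut0 ht htt0 _
  obtain ⟨hdom, heq⟩ := backward_shift_forward_shift_swap P3a P4p P5m hu hut0 ht htt0
  obtain ⟨hdom', heq'⟩ := P4m t (δp u t) hdom
  rw [heq] at hdom' heq'
  exact ⟨hdom', heq'.symm⟩

theorem stmt2
    (T Tstar : Set ℝ) (t0 : ℝ) (δm δp : ℝ → ℝ → ℝ)
    (hTne : T.Nonempty) (hTcl : IsClosed T)
    (hTstarne : Tstar.Nonempty) (hTstarsub : Tstar ⊆ T) (ht0 : t0 ∈ Tstar)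
    -- (P1) strict monotonicity in the second argument
    (P1m : ∀ T0 t u, (T0, t) ∈ SDom T Tstar t0 δm → (T0, u) ∈ SDom T Tstar t0 δm →
        T0 ≤ t → t < u → δm T0 t < δm T0 u)
    (P1p : ∀ T0 t u, (T0, t) ∈ SDom T Tstar t0 δp → (T0, u) ∈ SDom T Tstar t0 δp →
        T0 ≤ t → t < u → δp T0 t < δp T0 u)
    -- (P2) monotonicity in the shift size
    (P2m : ∀ T1 T2 u, (T1, u) ∈ SDom T Tstar t0 δm → (T2, u) ∈ SDom T Tstar t0 δm →
        T1 < T2 → δm T2 u < δm T1 u)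
    (P2p : ∀ T1 T2 u, (T1, u) ∈ SDom T Tstar t0 δp → (T2, u) ∈ SDom T Tstar t0 δp →
        T1 < T2 → δp T1 u < δp T2 u)
    -- (P3)
    (P3a : ∀ t, t ∈ T → t0 ≤ t → (t, t0) ∈ SDom T Tstar t0 δp ∧ δp t t0 = t)
    (P3b : ∀ t, t ∈ Tstar → (t0, t) ∈ SDom T Tstar t0 δp ∧ δp t0 t = t)
    -- (P4)
    (P4p : ∀ s t, (s, t) ∈ SDom T Tstar t0 δp →
        (s, δp s t) ∈ SDom T Tstar t0 δm ∧ δm s (δp s t) = t)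
    (P4m : ∀ s t, (s, t) ∈ SDom T Tstar t0 δm →
        (s, δm s t) ∈ SDom T Tstar t0 δp ∧ δp s (δm s t) = t)
    -- (P5)
    (P5p : ∀ s t u, (s, t) ∈ SDom T Tstar t0 δp → (u, δp s t) ∈ SDom T Tstar t0 δm →
        (s, δm u t) ∈ SDom T Tstar t0 δp ∧ δm u (δp s t) = δp s (δm u t))
    (P5m : ∀ s t u, (s, t) ∈ SDom T Tstar t0 δm → (u, δm s t) ∈ SDom T Tstar t0 δp →
        (s, δp u t) ∈ SDom T Tstar t0 δm ∧ δp u (δm s t) = δm s (δp u t))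
    :
    ∀ u t, u ∈ T → t0 ≤ u → t ∈ T → t0 ≤ t → (u, t) ∈ SDom T Tstar t0 δp →
      (t, u) ∈ SDom T Tstar t0 δp ∧ δp u t = δp t u :=
  stmt2_general T Tstar t0 δm δp P3a P4p P4m P5m
end

section
/- Let u, s ∈ [t₀,∞) ∩ 𝕋 and v ∈ 𝕋* be such that (s,v) ∈ D₋ with v ≥ s and (u,s) ∈ D₋ with s ≥ u. Then the pair (δ₋(u,s), δ₋(s,v)) belongs to D₊ and δ₊(δ₋(u,s), δ₋(s,v)) = δ₋(u,v). -/
section ShiftOperators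

variable {T Tstar : Set ℝ} {t0 : ℝ} {δm δp : ℝ → ℝ → ℝ}

theorem deltaMinus_self
    (P3a : ∀ t, t ∈ T → t0 ≤ t → (t, t0) ∈ SDom T Tstar t0 δp ∧ δp t t0 = t)
    (P4p : ∀ s t, (s, t) ∈ SDom T Tstar t0 δp →
        (s, δp s t) ∈ SDom T Tstar t0 δm ∧ δm s (δp s t) = t)
    {x : ℝ} (hx : x ∈ T) (hx0 : t0 ≤ x) :
    (x, x) ∈ SDom T Tstar t0 δm ∧ δm x x = t0 := by
  obtain ⟨hxD, hxE⟩ := P3a x hx hx0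
  simpa only [hxE] using P4p x t0 hxD

theorem le_deltaMinus
    (P1m : ∀ T0 t u, (T0, t) ∈ SDom T Tstar t0 δm → (T0, u) ∈ SDom T Tstar t0 δm →
        T0 ≤ t → t < u → δm T0 t < δm T0 u)
    (P3a : ∀ t, t ∈ T → t0 ≤ t → (t, t0) ∈ SDom T Tstar t0 δp ∧ δp t t0 = t)
    (P4p : ∀ s t, (s, t) ∈ SDom T Tstar t0 δp →
        (s, δp s t) ∈ SDom T Tstar t0 δm ∧ δm s (δp s t) = t)
    {x y : ℝ} (hxy : (x, y) ∈ SDom T Tstar t0 δm) (hle : x ≤ y) :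
    t0 ≤ δm x y := by
  obtain ⟨hxxD, hxxE⟩ := deltaMinus_self P3a P4p hxy.1 hxy.2.1
  rcases hle.eq_or_lt with rfl | hlt
  · exact hxxE.ge
  · exact hxxE ▸ (P1m x x y hxxD hxy le_rfl hlt).le

theorem deltaPlus_comm
    (P3a : ∀ t, t ∈ T → t0 ≤ t → (t, t0) ∈ SDom T Tstar t0 δp ∧ δp t t0 = t)
    (P4p : ∀ s t, (s, t) ∈ SDom T Tstar t0 δp →
        (s, δp s t) ∈ SDom T Tstar t0 δm ∧ δm s (δp s t) = t)
    (P4m : ∀ s t, (s, t) ∈ SDom T Tstar t0 δm →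
        (s, δm s t) ∈ SDom T Tstar t0 δp ∧ δp s (δm s t) = t)
    (P5m : ∀ s t u, (s, t) ∈ SDom T Tstar t0 δm → (u, δm s t) ∈ SDom T Tstar t0 δp →
        (s, δp u t) ∈ SDom T Tstar t0 δm ∧ δp u (δm s t) = δm s (δp u t))
    {x w : ℝ} (hx : x ∈ T) (hx0 : t0 ≤ x) (hw : w ∈ T) (hw0 : t0 ≤ w) :
    (x, w) ∈ SDom T Tstar t0 δp ∧ δp x w = δp w x := by
  obtain ⟨hxxD, hxxE⟩ := deltaMinus_self P3a P4p hx hx0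
  obtain ⟨hwD, hwE⟩ := P3a w hw hw0
  obtain ⟨hD, hE⟩ := P5m x x w hxxD (hxxE ▸ hwD)
  have hback : δm x (δp w x) = w := by rw [← hE, hxxE, hwE]
  simpa only [hback] using P4m x (δp w x) hD

end ShiftOperators

theorem stmt4_general
    (T Tstar : Set ℝ) (t0 : ℝ) (δm δp : ℝ → ℝ → ℝ)
    (hTstarsub : Tstar ⊆ T)
    -- (P1) strict monotonicity in the second argument
    (P1m : ∀ T0 t u, (T0, t) ∈ SDom T Tstar t0 δm → (T0, u) ∈ SDom T Tstar t0 δm →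
        T0 ≤ t → t < u → δm T0 t < δm T0 u)
    -- (P3)
    (P3a : ∀ t, t ∈ T → t0 ≤ t → (t, t0) ∈ SDom T Tstar t0 δp ∧ δp t t0 = t)
    -- (P4)
    (P4p : ∀ s t, (s, t) ∈ SDom T Tstar t0 δp →
        (s, δp s t) ∈ SDom T Tstar t0 δm ∧ δm s (δp s t) = t)
    (P4m : ∀ s t, (s, t) ∈ SDom T Tstar t0 δm →
        (s, δm s t) ∈ SDom T Tstar t0 δp ∧ δp s (δm s t) = t)
    -- (P5)
    (P5m : ∀ s t u, (s, t) ∈ SDom T Tstar t0 δm → (u, δm s t) ∈ SDom T Tstar t0 δp →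
        (s, δp u t) ∈ SDom T Tstar t0 δm ∧ δp u (δm s t) = δm s (δp u t))
    :
    ∀ u s v, u ∈ T → t0 ≤ u → s ∈ T → t0 ≤ s → v ∈ Tstar →
      (s, v) ∈ SDom T Tstar t0 δm → s ≤ v →
      (u, s) ∈ SDom T Tstar t0 δm → u ≤ s →
      (δm u s, δm s v) ∈ SDom T Tstar t0 δp ∧ δp (δm u s) (δm s v) = δm u v := by
  intro u s v _ _ hs hs0 _ hsvD hsv husD hus
  set a := δm u s
  set b := δm s v
  have haT : a ∈ T := hTstarsub husD.2.2.2
  have hbT : b ∈ T := hTstarsub hsvD.2.2.2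
  have ha0 : t0 ≤ a := le_deltaMinus P1m P3a P4p husD hus
  have hb0 : t0 ≤ b := le_deltaMinus P1m P3a P4p hsvD hsv
  obtain ⟨habD, hab⟩ := deltaPlus_comm P3a P4p P4m P5m haT ha0 hbT hb0
  have hbs : δp b s = v := by
    rw [← (deltaPlus_comm P3a P4p P4m P5m hs hs0 hbT hb0).2, (P4m s v hsvD).2]
  have hba : δp b a = δm u v := by
    rw [(P5m u s b husD (deltaPlus_comm P3a P4p P4m P5m hbT hb0 haT ha0).1).2, hbs]
  exact ⟨habD, hab.trans hba⟩

theorem stmt4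
    (T Tstar : Set ℝ) (t0 : ℝ) (δm δp : ℝ → ℝ → ℝ)
    (hTne : T.Nonempty) (hTcl : IsClosed T)
    (hTstarne : Tstar.Nonempty) (hTstarsub : Tstar ⊆ T) (ht0 : t0 ∈ Tstar)
    -- (P1) strict monotonicity in the second argument
    (P1m : ∀ T0 t u, (T0, t) ∈ SDom T Tstar t0 δm → (T0, u) ∈ SDom T Tstar t0 δm →
        T0 ≤ t → t < u → δm T0 t < δm T0 u)
    (P1p : ∀ T0 t u, (T0, t) ∈ SDom T Tstar t0 δp → (T0, u) ∈ SDom T Tstar t0 δp →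
        T0 ≤ t → t < u → δp T0 t < δp T0 u)
    -- (P2) monotonicity in the shift size
    (P2m : ∀ T1 T2 u, (T1, u) ∈ SDom T Tstar t0 δm → (T2, u) ∈ SDom T Tstar t0 δm →
        T1 < T2 → δm T2 u < δm T1 u)
    (P2p : ∀ T1 T2 u, (T1, u) ∈ SDom T Tstar t0 δp → (T2, u) ∈ SDom T Tstar t0 δp →
        T1 < T2 → δp T1 u < δp T2 u)
    -- (P3)
    (P3a : ∀ t, t ∈ T → t0 ≤ t → (t, t0) ∈ SDom T Tstar t0 δp ∧ δp t t0 = t)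
    (P3b : ∀ t, t ∈ Tstar → (t0, t) ∈ SDom T Tstar t0 δp ∧ δp t0 t = t)
    -- (P4)
    (P4p : ∀ s t, (s, t) ∈ SDom T Tstar t0 δp →
        (s, δp s t) ∈ SDom T Tstar t0 δm ∧ δm s (δp s t) = t)
    (P4m : ∀ s t, (s, t) ∈ SDom T Tstar t0 δm →
        (s, δm s t) ∈ SDom T Tstar t0 δp ∧ δp s (δm s t) = t)
    -- (P5)
    (P5p : ∀ s t u, (s, t) ∈ SDom T Tstar t0 δp → (u, δp s t) ∈ SDom T Tstar t0 δm →
        (s, δm u t) ∈ SDom T Tstar t0 δp ∧ δm u (δp s t) = δp s (δm u t))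
    (P5m : ∀ s t u, (s, t) ∈ SDom T Tstar t0 δm → (u, δm s t) ∈ SDom T Tstar t0 δp →
        (s, δp u t) ∈ SDom T Tstar t0 δm ∧ δp u (δm s t) = δm s (δp u t))
    :
    ∀ u s v, u ∈ T → t0 ≤ u → s ∈ T → t0 ≤ s → v ∈ Tstar →
      (s, v) ∈ SDom T Tstar t0 δm → s ≤ v →
      (u, s) ∈ SDom T Tstar t0 δm → u ≤ s →
      (δm u s, δm s v) ∈ SDom T Tstar t0 δp ∧ δp (δm u s) (δm s v) = δm u v :=
  stmt4_general T Tstar t0 δm δp hTstarsub P1m P3a P4p P4m P5m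
end

section
/- A sticky point cannot belong to the interval [t₀,∞) ∩ 𝕋: if t* ∈ 𝕋 with t* ≠ t₀ satisfies δ±(s,t*) = t* for every s ∈ [t₀,∞) ∩ 𝕋 with (s,t*) ∈ D±, then t* ∉ [t₀,∞) ∩ 𝕋. -/
theorem shift_minus_self_eq_initial {T : Set ℝ} {t0 : ℝ} {δm δp : ℝ → ℝ → ℝ}
    (P3a : ∀ t, t ∈ T → t0 ≤ t → (t, t0) ∈ SDom T T t0 δp ∧ δp t t0 = t)
    (P4p : ∀ s t, (s, t) ∈ SDom T T t0 δp →
        (s, δp s t) ∈ SDom T T t0 δm ∧ δm s (δp s t) = t)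
    {t : ℝ} (ht : t ∈ T) (hle : t0 ≤ t) :
    (t, t) ∈ SDom T T t0 δm ∧ δm t t = t0 := by
  obtain ⟨hdom, hshift⟩ := P3a t ht hle
  simpa only [hshift] using P4p t t0 hdom

theorem stmt6_general
    (T : Set ℝ) (t0 : ℝ) (δm δp : ℝ → ℝ → ℝ)
    -- (P3)
    (P3a : ∀ t, t ∈ T → t0 ≤ t → (t, t0) ∈ SDom T T t0 δp ∧ δp t t0 = t)
    -- (P4)
    (P4p : ∀ s t, (s, t) ∈ SDom T T t0 δp →
        (s, δp s t) ∈ SDom T T t0 δm ∧ δm s (δp s t) = t)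
    -- tstar is a sticky point
    (tstar : ℝ) (hne : tstar ≠ t0)
    (hstickym : ∀ s, s ∈ T → t0 ≤ s → (s, tstar) ∈ SDom T T t0 δm → δm s tstar = tstar)
    :
    ¬ (tstar ∈ T ∧ t0 ≤ tstar) := by
  rintro ⟨hT, hle⟩
  obtain ⟨hdom, hself⟩ := shift_minus_self_eq_initial P3a P4p hT hle
  exact hne ((hstickym tstar hT hle hdom).symm.trans hself)

theorem stmt6
    (T : Set ℝ) (t0 : ℝ) (δm δp : ℝ → ℝ → ℝ)
    (hTne : T.Nonempty) (hTcl : IsClosed T) (ht0 : t0 ∈ T)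
    -- (P3)
    (P3a : ∀ t, t ∈ T → t0 ≤ t → (t, t0) ∈ SDom T T t0 δp ∧ δp t t0 = t)
    (P3b : ∀ t, t ∈ T → (t0, t) ∈ SDom T T t0 δp ∧ δp t0 t = t)
    -- (P4)
    (P4p : ∀ s t, (s, t) ∈ SDom T T t0 δp →
        (s, δp s t) ∈ SDom T T t0 δm ∧ δm s (δp s t) = t)
    (P4m : ∀ s t, (s, t) ∈ SDom T T t0 δm →
        (s, δm s t) ∈ SDom T T t0 δp ∧ δp s (δm s t) = t)
    -- (P5)
    (P5p : ∀ s t u, (s, t) ∈ SDom T T t0 δp → (u, δp s t) ∈ SDom T T t0 δm →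
        (s, δm u t) ∈ SDom T T t0 δp ∧ δm u (δp s t) = δp s (δm u t))
    (P5m : ∀ s t u, (s, t) ∈ SDom T T t0 δm → (u, δm s t) ∈ SDom T T t0 δp →
        (s, δp u t) ∈ SDom T T t0 δm ∧ δp u (δm s t) = δm s (δp u t))
    -- tstar is a sticky point
    (tstar : ℝ) (htstar : tstar ∈ T) (hne : tstar ≠ t0)
    (hstickym : ∀ s, s ∈ T → t0 ≤ s → (s, tstar) ∈ SDom T T t0 δm → δm s tstar = tstar)
    (hstickyp : ∀ s, s ∈ T → t0 ≤ s → (s, tstar) ∈ SDom T T t0 δp → δp s tstar = tstar)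
    :
    ¬ (tstar ∈ T ∧ t0 ≤ tstar) :=
  stmt6_general T t0 δm δp P3a P4p tstar hne hstickym
end

section
/- The delay function commutes with the forward jump operator: δ₋(h, σ(t)) = σ(δ₋(h,t)) for all t ∈ [t₀,∞) ∩ 𝕋. -/
/-!
On `A = [t₀, ∞) ∩ 𝕋` the delay function agrees with `s ↦ δ₊(s, δ₋(h, t₀))` (by (P3) and (P5)),
so by (P2) it is strictly increasing there, and by assumption it maps `A` onto
`B = [δ₋(h, t₀), ∞) ∩ 𝕋`. Such an order isomorphism between closed sets carries
`𝕋 ∩ (t, ∞)` onto `𝕋 ∩ (δ₋(h, t), ∞)` and commutes with infima of bounded sets, hence with `σ`.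
-/

open Set

namespace StrictMonoOn

variable {f : ℝ → ℝ} {A B : Set ℝ}

theorem image_inter_Ioi (hf : StrictMonoOn f A) (hmaps : MapsTo f A B) (hsurj : SurjOn f A B)
    {t : ℝ} (ht : t ∈ A) : f '' (A ∩ Ioi t) = B ∩ Ioi (f t) := by
  ext y
  constructor
  · rintro ⟨s, ⟨hsA, hts⟩, rfl⟩
    exact ⟨hmaps hsA, hf ht hsA hts⟩
  · rintro ⟨hyB, hty⟩
    obtain ⟨s, hsA, rfl⟩ := hsurj hyB
    exact ⟨s, ⟨hsA, (hf.lt_iff_lt ht hsA).1 hty⟩, rfl⟩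

theorem map_csInf (hf : StrictMonoOn f A) (hmaps : MapsTo f A B) (hsurj : SurjOn f A B)
    (hA : IsClosed A) (hB : IsClosed B) {U : Set ℝ} (hUA : U ⊆ A) (hne : U.Nonempty)
    (hbdd : BddBelow U) : f (sInf U) = sInf (f '' U) := by
  have hinfA : sInf U ∈ A := closure_minimal hUA hA (csInf_mem_closure hne hbdd)
  have hlower : ∀ y ∈ f '' U, f (sInf U) ≤ y := by
    rintro _ ⟨u, hu, rfl⟩
    exact hf.monotoneOn hinfA (hUA hu) (csInf_le hbdd hu)
  have himage_ne : (f '' U).Nonempty := hne.image f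
  have hinfB : sInf (f '' U) ∈ B :=
    closure_minimal (image_subset_iff.2 fun u hu ↦ hmaps (hUA hu)) hB
      (csInf_mem_closure himage_ne ⟨_, hlower⟩)
  obtain ⟨s, hsA, hs⟩ := hsurj hinfB
  refine le_antisymm (le_csInf himage_ne hlower) ?_
  have hs_lower : ∀ u ∈ U, s ≤ u := fun u hu ↦
    (hf.le_iff_le hsA (hUA hu)).1 (hs ▸ csInf_le ⟨_, hlower⟩ (mem_image_of_mem f hu))
  rw [← hs]
  exact hf.monotoneOn hsA hinfA (le_csInf hne hs_lower)

end StrictMonoOn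

theorem delay_eq_shift_delay_initial (T Tstar : Set ℝ) (t0 : ℝ) (δm δp : ℝ → ℝ → ℝ)
    (P3a : ∀ t, t ∈ T → t0 ≤ t → (t, t0) ∈ SDom T Tstar t0 δp ∧ δp t t0 = t)
    (P5p : ∀ s t u, (s, t) ∈ SDom T Tstar t0 δp → (u, δp s t) ∈ SDom T Tstar t0 δm →
        (s, δm u t) ∈ SDom T Tstar t0 δp ∧ δm u (δp s t) = δp s (δm u t))
    (h : ℝ) (hdom : ∀ t, t ∈ T → t0 ≤ t → (h, t) ∈ SDom T Tstar t0 δm)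
    {s : ℝ} (hsT : s ∈ T) (hs0 : t0 ≤ s) :
    (s, δm h t0) ∈ SDom T Tstar t0 δp ∧ δm h s = δp s (δm h t0) := by
  obtain ⟨hdomp, hshift⟩ := P3a s hsT hs0
  have hdomm : (h, δp s t0) ∈ SDom T Tstar t0 δm := by rw [hshift]; exact hdom s hsT hs0
  obtain ⟨hdom', hcomm⟩ := P5p s t0 h hdomp hdomm
  rw [hshift] at hcomm
  exact ⟨hdom', hcomm⟩

theorem strictMonoOn_delay (T Tstar : Set ℝ) (t0 : ℝ) (δm δp : ℝ → ℝ → ℝ)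
    (P2p : ∀ T1 T2 u, (T1, u) ∈ SDom T Tstar t0 δp → (T2, u) ∈ SDom T Tstar t0 δp →
        T1 < T2 → δp T1 u < δp T2 u)
    (P3a : ∀ t, t ∈ T → t0 ≤ t → (t, t0) ∈ SDom T Tstar t0 δp ∧ δp t t0 = t)
    (P5p : ∀ s t u, (s, t) ∈ SDom T Tstar t0 δp → (u, δp s t) ∈ SDom T Tstar t0 δm →
        (s, δm u t) ∈ SDom T Tstar t0 δp ∧ δm u (δp s t) = δp s (δm u t))
    (h : ℝ) (hdom : ∀ t, t ∈ T → t0 ≤ t → (h, t) ∈ SDom T Tstar t0 δm) :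
    StrictMonoOn (δm h) (T ∩ Ici t0) := by
  rintro x ⟨hxT, hx0⟩ y ⟨hyT, hy0⟩ hxy
  obtain ⟨hx, hx_eq⟩ := delay_eq_shift_delay_initial T Tstar t0 δm δp P3a P5p h hdom hxT hx0
  obtain ⟨hy, hy_eq⟩ := delay_eq_shift_delay_initial T Tstar t0 δm δp P3a P5p h hdom hyT hy0
  rw [hx_eq, hy_eq]
  exact P2p x y _ hx hy hxy

theorem stmt7_general
    (T Tstar : Set ℝ) (t0 : ℝ) (δm δp : ℝ → ℝ → ℝ)
    (hTcl : IsClosed T)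
    -- (P2) monotonicity in the shift size
    (P2p : ∀ T1 T2 u, (T1, u) ∈ SDom T Tstar t0 δp → (T2, u) ∈ SDom T Tstar t0 δp →
        T1 < T2 → δp T1 u < δp T2 u)
    -- (P3)
    (P3a : ∀ t, t ∈ T → t0 ≤ t → (t, t0) ∈ SDom T Tstar t0 δp ∧ δp t t0 = t)
    -- (P5)
    (P5p : ∀ s t u, (s, t) ∈ SDom T Tstar t0 δp → (u, δp s t) ∈ SDom T Tstar t0 δm →
        (s, δm u t) ∈ SDom T Tstar t0 δp ∧ δm u (δp s t) = δp s (δm u t))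
    -- the time scale is unbounded above
    (hTub : ∀ r : ℝ, ∃ s ∈ T, r < s)
    -- the forward jump operator
    (σ : ℝ → ℝ) (hσ : ∀ t, σ t = sInf {s | s ∈ T ∧ t < s})
    -- the delay h : h ∈ (t0, ∞) ∩ T and (h, t) ∈ D± for all t ∈ [t0, ∞) ∩ T
    (h : ℝ)
    (hdom : ∀ t, t ∈ T → t0 ≤ t →
        (h, t) ∈ SDom T Tstar t0 δm ∧ (h, t) ∈ SDom T Tstar t0 δp)
    -- δm h · maps [t0, ∞) ∩ T onto [δm h t0, ∞) ∩ T
    (honto1 : ∀ t, t ∈ T → t0 ≤ t → δm h t ∈ T ∧ δm h t0 ≤ δm h t)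
    (honto2 : ∀ y, y ∈ T → δm h t0 ≤ y → ∃ t, t ∈ T ∧ t0 ≤ t ∧ δm h t = y)
    :
    ∀ t, t ∈ T → t0 ≤ t → δm h (σ t) = σ (δm h t) := by
  intro t htT ht0
  have hf := strictMonoOn_delay T Tstar t0 δm δp P2p P3a P5p h fun s hs hs0 ↦ (hdom s hs hs0).1
  have hmaps : MapsTo (δm h) (T ∩ Ici t0) (T ∩ Ici (δm h t0)) := fun s ⟨hsT, hs0⟩ ↦ honto1 s hsT hs0
  have hsurj : SurjOn (δm h) (T ∩ Ici t0) (T ∩ Ici (δm h t0)) := by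
    rintro y ⟨hyT, hy⟩
    obtain ⟨s, hsT, hs0, rfl⟩ := honto2 y hyT hy
    exact ⟨s, ⟨hsT, hs0⟩, rfl⟩
  have hupper : ∀ {a r : ℝ}, a ≤ r → {s | s ∈ T ∧ r < s} = (T ∩ Ici a) ∩ Ioi r := fun har ↦ by
    ext s
    exact ⟨fun ⟨hs, hrs⟩ ↦ ⟨⟨hs, har.trans hrs.le⟩, hrs⟩, fun ⟨⟨hs, _⟩, hrs⟩ ↦ ⟨hs, hrs⟩⟩
  obtain ⟨s, hsT, hts⟩ := hTub t
  have hne : ((T ∩ Ici t0) ∩ Ioi t).Nonempty := ⟨s, ⟨hsT, ht0.trans hts.le⟩, hts⟩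
  have hbdd : BddBelow ((T ∩ Ici t0) ∩ Ioi t) := ⟨t, fun _ hu ↦ le_of_lt hu.2⟩
  rw [hσ, hσ, hupper ht0, hupper (honto1 t htT ht0).2,
    hf.map_csInf hmaps hsurj (hTcl.inter isClosed_Ici) (hTcl.inter isClosed_Ici)
      inter_subset_left hne hbdd,
    hf.image_inter_Ioi hmaps hsurj ⟨htT, ht0⟩]

theorem stmt7
    (T Tstar : Set ℝ) (t0 : ℝ) (δm δp : ℝ → ℝ → ℝ)
    (hTne : T.Nonempty) (hTcl : IsClosed T)
    (hTstarne : Tstar.Nonempty) (hTstarsub : Tstar ⊆ T) (ht0 : t0 ∈ Tstar)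
    -- (P1) strict monotonicity in the second argument
    (P1m : ∀ T0 t u, (T0, t) ∈ SDom T Tstar t0 δm → (T0, u) ∈ SDom T Tstar t0 δm →
        T0 ≤ t → t < u → δm T0 t < δm T0 u)
    (P1p : ∀ T0 t u, (T0, t) ∈ SDom T Tstar t0 δp → (T0, u) ∈ SDom T Tstar t0 δp →
        T0 ≤ t → t < u → δp T0 t < δp T0 u)
    -- (P2) monotonicity in the shift size
    (P2m : ∀ T1 T2 u, (T1, u) ∈ SDom T Tstar t0 δm → (T2, u) ∈ SDom T Tstar t0 δm →
        T1 < T2 → δm T2 u < δm T1 u)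
    (P2p : ∀ T1 T2 u, (T1, u) ∈ SDom T Tstar t0 δp → (T2, u) ∈ SDom T Tstar t0 δp →
        T1 < T2 → δp T1 u < δp T2 u)
    -- (P3)
    (P3a : ∀ t, t ∈ T → t0 ≤ t → (t, t0) ∈ SDom T Tstar t0 δp ∧ δp t t0 = t)
    (P3b : ∀ t, t ∈ Tstar → (t0, t) ∈ SDom T Tstar t0 δp ∧ δp t0 t = t)
    -- (P4)
    (P4p : ∀ s t, (s, t) ∈ SDom T Tstar t0 δp →
        (s, δp s t) ∈ SDom T Tstar t0 δm ∧ δm s (δp s t) = t)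
    (P4m : ∀ s t, (s, t) ∈ SDom T Tstar t0 δm →
        (s, δm s t) ∈ SDom T Tstar t0 δp ∧ δp s (δm s t) = t)
    -- (P5)
    (P5p : ∀ s t u, (s, t) ∈ SDom T Tstar t0 δp → (u, δp s t) ∈ SDom T Tstar t0 δm →
        (s, δm u t) ∈ SDom T Tstar t0 δp ∧ δm u (δp s t) = δp s (δm u t))
    (P5m : ∀ s t u, (s, t) ∈ SDom T Tstar t0 δm → (u, δm s t) ∈ SDom T Tstar t0 δp →
        (s, δp u t) ∈ SDom T Tstar t0 δm ∧ δp u (δm s t) = δm s (δp u t))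
    -- the time scale is unbounded above
    (hTub : ∀ r : ℝ, ∃ s ∈ T, r < s)
    -- the forward jump operator
    (σ : ℝ → ℝ) (hσ : ∀ t, σ t = sInf {s | s ∈ T ∧ t < s})
    -- the delay h : h ∈ (t0, ∞) ∩ T and (h, t) ∈ D± for all t ∈ [t0, ∞) ∩ T
    (h : ℝ) (hhT : h ∈ T) (hht0 : t0 < h)
    (hdom : ∀ t, t ∈ T → t0 ≤ t →
        (h, t) ∈ SDom T Tstar t0 δm ∧ (h, t) ∈ SDom T Tstar t0 δp)
    -- δm h · maps [t0, ∞) ∩ T onto [δm h t0, ∞) ∩ T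
    (honto1 : ∀ t, t ∈ T → t0 ≤ t → δm h t ∈ T ∧ δm h t0 ≤ δm h t)
    (honto2 : ∀ y, y ∈ T → δm h t0 ≤ y → ∃ t, t ∈ T ∧ t0 ≤ t ∧ δm h t = y)
    :
    ∀ t, t ∈ T → t0 ≤ t → δm h (σ t) = σ (δm h t) :=
  stmt7_general T Tstar t0 δm δp hTcl P2p P3a P5p hTub σ hσ h hdom honto1 honto2
end

section
/- If the interval (t₀,h) ∩ 𝕋 is empty, then σ(δ₋(h,t)) = t for all t ∈ [t₀,∞) ∩ 𝕋; in particular every point of [δ₋(h,t₀),∞) ∩ 𝕋 is right-scattered, i.e. σ(u) > u for all u ∈ [δ₋(h,t₀),∞) ∩ 𝕋. -/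
/-!
Write `g = δ₋(h, ·)`. The shift axioms give `g t < t`, `g h = t₀`, and make `g` strictly
increasing on `[h, ∞) ∩ 𝕋`; since `(t₀, h) ∩ 𝕋 = ∅`, `g` sends `(h, ∞) ∩ 𝕋` into itself.
Call `b ∈ [h, ∞) ∩ 𝕋` bad if `𝕋` meets `(g b, b)`, i.e. `g b` is not the predecessor of `b`.
Applying `g` to a witness shows that `g b` is bad whenever `b` is. If there were a bad point,
let `L` be the infimum of the bad points (it lies in `𝕋` as `𝕋` is closed) and use
surjectivity to write `L = g p`, so `L < p`. Some bad `b` lies below `p`, so the bad point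
`g b` is `< g p = L`, which is absurd. Hence `(g t, t) ∩ 𝕋 = ∅`, i.e. `σ (g t) = t`.
-/

open Set

theorem sInf_setOf_mem_gt_eq {T : Set ℝ} {a b : ℝ} (hb : b ∈ T) (hab : a < b)
    (hgap : ∀ s ∈ T, a < s → b ≤ s) : sInf {s | s ∈ T ∧ a < s} = b :=
  IsLeast.csInf_eq ⟨⟨hb, hab⟩, fun s hs => hgap s hs.1 hs.2⟩

section Delay

variable {T : Set ℝ} {g : ℝ → ℝ} {t0 h : ℝ}

theorem le_of_mem_of_gap (hgap : ∀ s, s ∈ T → ¬ (t0 < s ∧ s < h)) {s : ℝ} (hs : s ∈ T)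
    (hs0 : t0 < s) : h ≤ s :=
  le_of_not_gt fun hsh => hgap s hs ⟨hs0, hsh⟩

def nonPredecessors (T : Set ℝ) (g : ℝ → ℝ) (h : ℝ) : Set ℝ :=
  {b | b ∈ T ∧ h ≤ b ∧ ∃ s ∈ T, g b < s ∧ s < b}

theorem map_mem_nonPredecessors (hhT : h ∈ T) (hht0 : t0 < h) (hgh : g h = t0)
    (hmaps : ∀ t ∈ T, t0 ≤ t → g t ∈ T) (hmono : StrictMonoOn g (T ∩ Ici h))
    (hgap : ∀ s, s ∈ T → ¬ (t0 < s ∧ s < h)) {b : ℝ} (hb : b ∈ nonPredecessors T g h) :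
    g b ∈ nonPredecessors T g h := by
  obtain ⟨hbT, hhb, s, hsT, hbs, hsb⟩ := hb
  have hgbT : g b ∈ T := hmaps b hbT (hht0.le.trans hhb)
  have hhgb : h ≤ g b := by
    rcases hhb.eq_or_lt with rfl | hhb
    · exact absurd ⟨hgh ▸ hbs, hsb⟩ (hgap s hsT)
    · exact le_of_mem_of_gap hgap hgbT (hgh ▸ hmono ⟨hhT, self_mem_Ici⟩ ⟨hbT, hhb.le⟩ hhb)
  have hhs : h ≤ s := hhgb.trans hbs.le
  exact ⟨hgbT, hhgb, g s, hmaps s hsT (hht0.le.trans hhs),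
    hmono ⟨hgbT, hhgb⟩ ⟨hsT, hhs⟩ hbs, hmono ⟨hsT, hhs⟩ ⟨hbT, hhb⟩ hsb⟩

theorem nonPredecessors_eq_empty (hTcl : IsClosed T) (hhT : h ∈ T) (hht0 : t0 < h)
    (hgh : g h = t0) (hmaps : ∀ t ∈ T, t0 ≤ t → g t ∈ T) (hlt : ∀ t ∈ T, t0 ≤ t → g t < t)
    (hmono : StrictMonoOn g (T ∩ Ici h)) (honto : ∀ y ∈ T, g t0 ≤ y → ∃ t ∈ T, t0 ≤ t ∧ g t = y)
    (hgap : ∀ s, s ∈ T → ¬ (t0 < s ∧ s < h)) : nonPredecessors T g h = ∅ := by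
  set B := nonPredecessors T g h
  by_contra hne
  have hBne : B.Nonempty := nonempty_iff_ne_empty.mpr hne
  have hBbdd : BddBelow B := ⟨h, fun b hb => hb.2.1⟩
  have hLT : sInf B ∈ T :=
    hTcl.closure_subset_iff.mpr (fun b hb => hb.1) (csInf_mem_closure hBne hBbdd)
  have hhL : h ≤ sInf B := le_csInf hBne fun b hb => hb.2.1
  have ht0L : t0 ≤ sInf B := hht0.le.trans hhL
  have ht0T : t0 ∈ T := hgh ▸ hmaps h hhT hht0.le
  obtain ⟨p, hpT, ht0p, hpL⟩ := honto (sInf B) hLT ((hlt t0 ht0T le_rfl).le.trans ht0L)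
  obtain ⟨b, hbB, hbp⟩ := exists_lt_of_csInf_lt hBne (hpL ▸ hlt p hpT ht0p)
  have hgbp : g b < g p := hmono ⟨hbB.1, hbB.2.1⟩ ⟨hpT, hbB.2.1.trans hbp.le⟩ hbp
  exact (hpL ▸ hgbp).not_ge
    (csInf_le hBbdd (map_mem_nonPredecessors hhT hht0 hgh hmaps hmono hgap hbB))

theorem le_of_delay_lt (hTcl : IsClosed T) (hhT : h ∈ T) (hht0 : t0 < h)
    (hgh : g h = t0) (hmaps : ∀ t ∈ T, t0 ≤ t → g t ∈ T) (hlt : ∀ t ∈ T, t0 ≤ t → g t < t)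
    (hmono : StrictMonoOn g (T ∩ Ici h)) (honto : ∀ y ∈ T, g t0 ≤ y → ∃ t ∈ T, t0 ≤ t ∧ g t = y)
    (hgap : ∀ s, s ∈ T → ¬ (t0 < s ∧ s < h)) {t s : ℝ} (htT : t ∈ T) (ht0t : t0 ≤ t)
    (hsT : s ∈ T) (hts : g t < s) : t ≤ s := by
  by_contra! hst
  rcases ht0t.eq_or_lt with rfl | ht0t
  -- `t0` lies below `h`, outside `nonPredecessors`: write `s = g r`; the gap forces `r ≥ h`,
  -- and then `s = g r ≥ g h = t0`.
  · obtain ⟨r, hrT, ht0r, rfl⟩ := honto s hsT hts.le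
    rcases ht0r.eq_or_lt with rfl | ht0r
    · exact hts.false
    · have hhr : h ≤ r := le_of_mem_of_gap hgap hrT ht0r
      exact hst.not_ge (hgh ▸ hmono.monotoneOn ⟨hhT, self_mem_Ici⟩ ⟨hrT, hhr⟩ hhr)
  · have hbad : t ∈ nonPredecessors T g h :=
      ⟨htT, le_of_mem_of_gap hgap htT ht0t, s, hsT, hts, hst⟩
    rwa [nonPredecessors_eq_empty hTcl hhT hht0 hgh hmaps hlt hmono honto hgap] at hbad

end Delay

section Shift

variable {T Tstar : Set ℝ} {t0 : ℝ} {δm δp : ℝ → ℝ → ℝ}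

theorem backwardShift_lt_self
    (P2m : ∀ T1 T2 u, (T1, u) ∈ SDom T Tstar t0 δm → (T2, u) ∈ SDom T Tstar t0 δm →
        T1 < T2 → δm T2 u < δm T1 u)
    (P3b : ∀ t, t ∈ Tstar → (t0, t) ∈ SDom T Tstar t0 δp ∧ δp t0 t = t)
    (P4p : ∀ s t, (s, t) ∈ SDom T Tstar t0 δp →
        (s, δp s t) ∈ SDom T Tstar t0 δm ∧ δm s (δp s t) = t)
    {h t : ℝ} (hht0 : t0 < h) (hd : (h, t) ∈ SDom T Tstar t0 δm) : δm h t < t := by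
  obtain ⟨hd0, he⟩ := P3b t hd.2.2.1
  have hd0' := P4p t0 t hd0
  rw [he] at hd0'
  simpa only [hd0'.2] using P2m t0 h t hd0'.1 hd hht0

theorem backwardShift_self
    (P3a : ∀ t, t ∈ T → t0 ≤ t → (t, t0) ∈ SDom T Tstar t0 δp ∧ δp t t0 = t)
    (P4p : ∀ s t, (s, t) ∈ SDom T Tstar t0 δp →
        (s, δp s t) ∈ SDom T Tstar t0 δm ∧ δm s (δp s t) = t)
    {h : ℝ} (hhT : h ∈ T) (hht0 : t0 ≤ h) : δm h h = t0 := by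
  obtain ⟨hd, he⟩ := P3a h hhT hht0
  simpa only [he] using (P4p h t0 hd).2

end Shift

theorem stmt8_general
    (T Tstar : Set ℝ) (t0 : ℝ) (δm δp : ℝ → ℝ → ℝ)
    (hTcl : IsClosed T)
    (hTstarsub : Tstar ⊆ T)
    -- (P1) strict monotonicity in the second argument
    (P1m : ∀ T0 t u, (T0, t) ∈ SDom T Tstar t0 δm → (T0, u) ∈ SDom T Tstar t0 δm →
        T0 ≤ t → t < u → δm T0 t < δm T0 u)
    -- (P2) monotonicity in the shift size
    (P2m : ∀ T1 T2 u, (T1, u) ∈ SDom T Tstar t0 δm → (T2, u) ∈ SDom T Tstar t0 δm →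
        T1 < T2 → δm T2 u < δm T1 u)
    -- (P3)
    (P3a : ∀ t, t ∈ T → t0 ≤ t → (t, t0) ∈ SDom T Tstar t0 δp ∧ δp t t0 = t)
    (P3b : ∀ t, t ∈ Tstar → (t0, t) ∈ SDom T Tstar t0 δp ∧ δp t0 t = t)
    -- (P4)
    (P4p : ∀ s t, (s, t) ∈ SDom T Tstar t0 δp →
        (s, δp s t) ∈ SDom T Tstar t0 δm ∧ δm s (δp s t) = t)
    -- the forward jump operator
    (σ : ℝ → ℝ) (hσ : ∀ t, σ t = sInf {s | s ∈ T ∧ t < s})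
    -- the delay h : h ∈ (t0, ∞) ∩ T and (h, t) ∈ D± for all t ∈ [t0, ∞) ∩ T
    (h : ℝ) (hhT : h ∈ T) (hht0 : t0 < h)
    (hdom : ∀ t, t ∈ T → t0 ≤ t →
        (h, t) ∈ SDom T Tstar t0 δm ∧ (h, t) ∈ SDom T Tstar t0 δp)
    -- δm h · maps [t0, ∞) ∩ T onto [δm h t0, ∞) ∩ T
    (honto2 : ∀ y, y ∈ T → δm h t0 ≤ y → ∃ t, t ∈ T ∧ t0 ≤ t ∧ δm h t = y)
    -- the interval (t0, h) ∩ T is empty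
    (hgap : ∀ s, s ∈ T → ¬ (t0 < s ∧ s < h))
    :
    (∀ t, t ∈ T → t0 ≤ t → σ (δm h t) = t) ∧
    (∀ u, u ∈ T → δm h t0 ≤ u → u < σ u) := by
  have hmaps : ∀ t ∈ T, t0 ≤ t → δm h t ∈ T := fun t ht ht0 =>
    hTstarsub (hdom t ht ht0).1.2.2.2
  have hlt : ∀ t ∈ T, t0 ≤ t → δm h t < t := fun t ht ht0 =>
    backwardShift_lt_self P2m P3b P4p hht0 (hdom t ht ht0).1
  have hgh : δm h h = t0 := backwardShift_self P3a P4p hhT hht0.le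
  have hmono : StrictMonoOn (δm h) (T ∩ Ici h) := fun a ha b hb hab =>
    P1m h a b (hdom a ha.1 (hht0.le.trans ha.2)).1 (hdom b hb.1 (hht0.le.trans hb.2)).1 ha.2 hab
  have hσδ : ∀ t, t ∈ T → t0 ≤ t → σ (δm h t) = t := fun t ht ht0 =>
    (hσ _).trans <| sInf_setOf_mem_gt_eq ht (hlt t ht ht0) fun _ hs =>
      le_of_delay_lt hTcl hhT hht0 hgh hmaps hlt hmono honto2 hgap ht ht0 hs
  refine ⟨hσδ, fun u hu hu0 => ?_⟩
  obtain ⟨r, hrT, ht0r, rfl⟩ := honto2 u hu hu0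
  rw [hσδ r hrT ht0r]
  exact hlt r hrT ht0r

theorem stmt8
    (T Tstar : Set ℝ) (t0 : ℝ) (δm δp : ℝ → ℝ → ℝ)
    (hTne : T.Nonempty) (hTcl : IsClosed T)
    (hTstarne : Tstar.Nonempty) (hTstarsub : Tstar ⊆ T) (ht0 : t0 ∈ Tstar)
    -- (P1) strict monotonicity in the second argument
    (P1m : ∀ T0 t u, (T0, t) ∈ SDom T Tstar t0 δm → (T0, u) ∈ SDom T Tstar t0 δm →
        T0 ≤ t → t < u → δm T0 t < δm T0 u)
    (P1p : ∀ T0 t u, (T0, t) ∈ SDom T Tstar t0 δp → (T0, u) ∈ SDom T Tstar t0 δp →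
        T0 ≤ t → t < u → δp T0 t < δp T0 u)
    -- (P2) monotonicity in the shift size
    (P2m : ∀ T1 T2 u, (T1, u) ∈ SDom T Tstar t0 δm → (T2, u) ∈ SDom T Tstar t0 δm →
        T1 < T2 → δm T2 u < δm T1 u)
    (P2p : ∀ T1 T2 u, (T1, u) ∈ SDom T Tstar t0 δp → (T2, u) ∈ SDom T Tstar t0 δp →
        T1 < T2 → δp T1 u < δp T2 u)
    -- (P3)
    (P3a : ∀ t, t ∈ T → t0 ≤ t → (t, t0) ∈ SDom T Tstar t0 δp ∧ δp t t0 = t)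
    (P3b : ∀ t, t ∈ Tstar → (t0, t) ∈ SDom T Tstar t0 δp ∧ δp t0 t = t)
    -- (P4)
    (P4p : ∀ s t, (s, t) ∈ SDom T Tstar t0 δp →
        (s, δp s t) ∈ SDom T Tstar t0 δm ∧ δm s (δp s t) = t)
    (P4m : ∀ s t, (s, t) ∈ SDom T Tstar t0 δm →
        (s, δm s t) ∈ SDom T Tstar t0 δp ∧ δp s (δm s t) = t)
    -- (P5)
    (P5p : ∀ s t u, (s, t) ∈ SDom T Tstar t0 δp → (u, δp s t) ∈ SDom T Tstar t0 δm →
        (s, δm u t) ∈ SDom T Tstar t0 δp ∧ δm u (δp s t) = δp s (δm u t))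
    (P5m : ∀ s t u, (s, t) ∈ SDom T Tstar t0 δm → (u, δm s t) ∈ SDom T Tstar t0 δp →
        (s, δp u t) ∈ SDom T Tstar t0 δm ∧ δp u (δm s t) = δm s (δp u t))
    -- the time scale is unbounded above
    (hTub : ∀ r : ℝ, ∃ s ∈ T, r < s)
    -- the forward jump operator
    (σ : ℝ → ℝ) (hσ : ∀ t, σ t = sInf {s | s ∈ T ∧ t < s})
    -- the delay h : h ∈ (t0, ∞) ∩ T and (h, t) ∈ D± for all t ∈ [t0, ∞) ∩ T
    (h : ℝ) (hhT : h ∈ T) (hht0 : t0 < h)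
    (hdom : ∀ t, t ∈ T → t0 ≤ t →
        (h, t) ∈ SDom T Tstar t0 δm ∧ (h, t) ∈ SDom T Tstar t0 δp)
    -- δm h · maps [t0, ∞) ∩ T onto [δm h t0, ∞) ∩ T
    (honto1 : ∀ t, t ∈ T → t0 ≤ t → δm h t ∈ T ∧ δm h t0 ≤ δm h t)
    (honto2 : ∀ y, y ∈ T → δm h t0 ≤ y → ∃ t, t ∈ T ∧ t0 ≤ t ∧ δm h t = y)
    -- the interval (t0, h) ∩ T is empty
    (hgap : ∀ s, s ∈ T → ¬ (t0 < s ∧ s < h))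
    :
    (∀ t, t ∈ T → t0 ≤ t → σ (δm h t) = t) ∧
    (∀ u, u ∈ T → δm h t0 ≤ u → u < σ u) :=
  stmt8_general T Tstar t0 δm δp hTcl hTstarsub P1m P2m P3a P3b P4p σ hσ h hhT hht0 hdom honto2 hgap
end

section
/- Assume there exists λ > 0 such that −λ/(h(1+λ)) ≤ Q(t) ≤ −λ·h·b(t+h)² for all t ≥ t₀. Then along any solution x of the delay differential equation, the function V is differentiable on [t₀,∞) and satisfies V′(t) ≤ Q(t)·V(t) for all t ≥ t₀. -/
/-!
Differentiating the sliding integral `∫_{t-h}^t b(s+h) x(s) ds` produces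
`b(t+h) x(t) - b(t) x(t-h)`, which cancels the delay term, so `A' = Q x`. The double integral
`W` has derivative `h b(t+h)² x(t)² - P` with `P = ∫_{t-h}^t b(s+h)² x(s)² ds`, hence
`V' = 2 A Q x + λ (h b(t+h)² x(t)² - P)`. Comparing with `Q V` uses `W ≤ h P`, Cauchy–Schwarz
`(A - x)² ≤ h P`, and the two bounds on `Q`.
-/

open MeasureTheory intervalIntegral Set

lemma intervalIntegrable_of_continuousOn_Ici {f : ℝ → ℝ} {c u v : ℝ}
    (hf : ContinuousOn f (Ici c)) (hu : c ≤ u) (hv : c ≤ v) : IntervalIntegrable f volume u v :=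
  (hf.mono (Icc_subset_Ici_self.trans (Ici_subset_Ici.mpr (le_inf hu hv)))).intervalIntegrable

lemma hasDerivWithinAt_integral_Ici {f : ℝ → ℝ} {c u : ℝ} (hf : ContinuousOn f (Ici c))
    (hu : c ≤ u) : HasDerivWithinAt (fun v => ∫ s in c..v, f s) (f u) (Ici c) u := by
  have hint := intervalIntegrable_of_continuousOn_Ici hf le_rfl hu
  have hmeas : AEStronglyMeasurable f (volume.restrict (Ici c)) :=
    hf.aestronglyMeasurable measurableSet_Ici
  rcases hu.eq_or_lt with rfl | hcu
  · exact integral_hasDerivWithinAt_right (t := Ioi c) hint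
      ⟨Ici c, Filter.mem_of_superset self_mem_nhdsWithin Ioi_subset_Ici_self, hmeas⟩
      ((hf c self_mem_Ici).mono Ioi_subset_Ici_self)
  · exact (integral_hasDerivAt_right hint ⟨Ici c, Ici_mem_nhds hcu, hmeas⟩
      (hf.continuousAt (Ici_mem_nhds hcu))).hasDerivWithinAt

section Window

variable {t₀ h t : ℝ}

lemma hasDerivWithinAt_integral_window {f : ℝ → ℝ} (hh : 0 ≤ h)
    (hf : ContinuousOn f (Ici (t₀ - h))) (ht : t₀ ≤ t) :
    HasDerivWithinAt (fun y => ∫ s in (y - h)..y, f s) (f t - f (t - h)) (Ici t₀) t := by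
  set F : ℝ → ℝ := fun v => ∫ s in (t₀ - h)..v, f s
  have hF : ∀ u, t₀ - h ≤ u → HasDerivWithinAt F (f u) (Ici (t₀ - h)) u :=
    fun u hu => hasDerivWithinAt_integral_Ici hf hu
  have hshift : MapsTo (· - h) (Ici t₀) (Ici (t₀ - h)) := fun y hy => by
    simp only [mem_Ici] at hy ⊢; linarith
  have hFt : HasDerivWithinAt F (f t) (Ici t₀) t :=
    (hF t (by linarith)).mono (Ici_subset_Ici.mpr (by linarith))
  have hFth : HasDerivWithinAt (fun y => F (y - h)) (f (t - h)) (Ici t₀) t := by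
    have := (hF (t - h) (by linarith)).comp t ((hasDerivWithinAt_id t _).sub_const h) hshift
    rwa [mul_one] at this
  have hwindow : ∀ y ∈ Ici t₀, ∫ s in (y - h)..y, f s = F y - F (y - h) := fun y hy =>
    (integral_interval_sub_left
      (intervalIntegrable_of_continuousOn_Ici hf le_rfl (by rw [mem_Ici] at hy; linarith))
      (intervalIntegrable_of_continuousOn_Ici hf le_rfl (by rw [mem_Ici] at hy; linarith))).symm
  exact (hFt.sub hFth).congr hwindow (hwindow t ht)

lemma hasDerivWithinAt_integral_window_integral {g : ℝ → ℝ} (hh : 0 ≤ h)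
    (hg : ContinuousOn g (Ici (t₀ - h))) (ht : t₀ ≤ t) :
    HasDerivWithinAt (fun y => ∫ s in (y - h)..y, ∫ u in s..y, g u)
      (h * g t - ∫ s in (t - h)..t, g s) (Ici t₀) t := by
  set G : ℝ → ℝ := fun v => ∫ s in (t₀ - h)..v, g s
  have hGc : ContinuousOn G (Ici (t₀ - h)) := fun u hu =>
    (hasDerivWithinAt_integral_Ici hg hu).continuousWithinAt
  have hGint : ∀ u v, t₀ - h ≤ u → t₀ - h ≤ v → ∫ s in u..v, g s = G v - G u := fun u v hu hv =>
    (integral_interval_sub_left (intervalIntegrable_of_continuousOn_Ici hg le_rfl hv)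
      (intervalIntegrable_of_continuousOn_Ici hg le_rfl hu)).symm
  have hrepr : ∀ y ∈ Ici t₀, ∫ s in (y - h)..y, ∫ u in s..y, g u
      = h * G y - ∫ s in (y - h)..y, G s := fun y hy => by
    rw [mem_Ici] at hy
    have hinner : EqOn (fun s => ∫ u in s..y, g u) (fun s => G y - G s) (uIcc (y - h) y) :=
      fun s hs => by
        rw [uIcc_of_le (by linarith)] at hs
        exact hGint s y (by linarith [hs.1]) (by linarith)
    rw [integral_congr hinner, integral_sub intervalIntegrable_const
        (intervalIntegrable_of_continuousOn_Ici hGc (by linarith) (by linarith)),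
      intervalIntegral.integral_const, smul_eq_mul, sub_sub_cancel]
  have hGt : HasDerivWithinAt G (g t) (Ici t₀) t :=
    (hasDerivWithinAt_integral_Ici hg (by linarith)).mono (Ici_subset_Ici.mpr (by linarith))
  have hderiv := (hGt.const_mul h).sub (hasDerivWithinAt_integral_window hh hGc ht)
  rw [hGint (t - h) t (by linarith) (by linarith)]
  exact hderiv.congr hrepr (hrepr t ht)

lemma integral_window_integral_le {g : ℝ → ℝ} {a b : ℝ} (hab : a ≤ b) (hg : ∀ u, 0 ≤ g u)
    (hgi : IntervalIntegrable g volume a b) :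
    ∫ s in a..b, ∫ u in s..b, g u ≤ (b - a) * ∫ u in a..b, g u := by
  have hinner : ContinuousOn (fun s => ∫ u in s..b, g u) (uIcc a b) :=
    continuousOn_primitive_interval_left <| by
      rw [uIcc_of_le hab]; exact (intervalIntegrable_iff_integrableOn_Icc_of_le hab).mp hgi
  calc ∫ s in a..b, ∫ u in s..b, g u ≤ ∫ _ in a..b, ∫ u in a..b, g u :=
        integral_mono_on hab hinner.intervalIntegrable intervalIntegrable_const fun s hs =>
          integral_mono_interval hs.1 hs.2 le_rfl (Filter.Eventually.of_forall hg) hgi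
    _ = (b - a) * ∫ u in a..b, g u := by rw [intervalIntegral.integral_const, smul_eq_mul]

end Window

lemma sq_integral_le_mul_integral_sq {f : ℝ → ℝ} {a b : ℝ} (hab : a ≤ b)
    (hf : IntervalIntegrable f volume a b)
    (hf2 : IntervalIntegrable (fun s => f s ^ 2) volume a b) :
    (∫ s in a..b, f s) ^ 2 ≤ (b - a) * ∫ s in a..b, f s ^ 2 := by
  rcases hab.eq_or_lt with rfl | hlt
  · simp
  set I := ∫ s in a..b, f s
  set P := ∫ s in a..b, f s ^ 2
  have hsq : ∫ s in a..b, (I - (b - a) * f s) ^ 2 = (b - a) * ((b - a) * P - I ^ 2) := by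
    rw [integral_congr (g := fun s => I ^ 2 - (2 * I * (b - a)) * f s + (b - a) ^ 2 * f s ^ 2)
        fun s _ => by ring,
      integral_add (intervalIntegrable_const.sub (hf.const_mul _)) (hf2.const_mul _),
      integral_sub intervalIntegrable_const (hf.const_mul _), intervalIntegral.integral_const,
      intervalIntegral.integral_const_mul, intervalIntegral.integral_const_mul, smul_eq_mul]
    ring
  have hnonneg : 0 ≤ (b - a) * ((b - a) * P - I ^ 2) :=
    hsq ▸ integral_nonneg hab fun s _ => sq_nonneg _
  nlinarith [nonneg_of_mul_nonneg_right hnonneg (sub_pos.mpr hlt)]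

lemma lyapunov_deriv_le_of_bounds {h lam q β X I P W : ℝ} (hh : 0 < h) (hlam : 0 < lam)
    (hq₁ : -lam / (h * (1 + lam)) ≤ q) (hq₂ : q ≤ -lam * h * β ^ 2)
    (hW : W ≤ h * P) (hI : I ^ 2 ≤ h * P) :
    2 * (X + I) * (q * X) + lam * (h * (β * X) ^ 2 - P) ≤ q * ((X + I) ^ 2 + lam * W) := by
  have hκ : lam / (h * (1 + lam)) * h * (1 + lam) = lam := by field_simp
  set κ := lam / (h * (1 + lam))
  have hκ₀ : 0 ≤ κ := by positivity
  have hqκ : 0 ≤ q + κ := by rw [neg_div] at hq₁; linarith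
  have hq₀ : q ≤ 0 := hq₂.trans (by nlinarith [mul_nonneg (mul_nonneg hlam.le hh.le) (sq_nonneg β)])
  have hhP : 0 ≤ h * P := (sq_nonneg I).trans hI
  -- -q I² ≤ κ h P and -λ q W ≤ λ κ h P; the `P`-terms then cancel because κ h (1 + λ) = λ.
  nlinarith [mul_le_mul_of_nonneg_right hq₂ (sq_nonneg X), mul_nonneg hqκ (sq_nonneg I),
    mul_le_mul_of_nonneg_left hI hκ₀, mul_le_mul_of_nonpos_left hW hq₀,
    mul_nonneg (mul_nonneg hlam.le hqκ) hhP, congrArg (· * P) hκ]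

theorem stmt10_general (t0 h lam : ℝ) (hh : 0 < h) (hlam : 0 < lam)
    (a b x : ℝ → ℝ) (hb : Continuous b)
    -- x is a solution of the delay differential equation
    (hxc : ContinuousOn x (Set.Ici (t0 - h)))
    (hx : ∀ t, t0 ≤ t → HasDerivWithinAt x (a t * x t + b t * x (t - h)) (Set.Ici t0) t)
    -- the auxiliary functions Q, A, V
    (Q A V : ℝ → ℝ)
    (hQ : ∀ t, Q t = a t + b (t + h))
    (hA : ∀ t, A t = x t + ∫ s in (t - h)..t, b (s + h) * x s)
    (hV : ∀ t, V t = (A t) ^ 2 +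
        lam * ∫ s in (t - h)..t, (∫ u in s..t, (b (u + h)) ^ 2 * (x u) ^ 2))
    -- the condition −λ/(h(1+λ)) ≤ Q(t) ≤ −λ·h·b(t+h)²
    (hcond : ∀ t, t0 ≤ t →
        -lam / (h * (1 + lam)) ≤ Q t ∧ Q t ≤ -lam * h * (b (t + h)) ^ 2) :
    ∀ t, t0 ≤ t → ∃ d, HasDerivWithinAt V d (Set.Ici t0) t ∧ d ≤ Q t * V t := by
  intro t ht
  simp_rw [← mul_pow] at hV
  have hf : ContinuousOn (fun s => b (s + h) * x s) (Ici (t0 - h)) :=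
    ((hb.comp (continuous_add_const h)).continuousOn).mul hxc
  have hg : ContinuousOn (fun s => (b (s + h) * x s) ^ 2) (Ici (t0 - h)) := hf.pow 2
  have hA' : HasDerivWithinAt A (Q t * x t) (Ici t0) t := by
    refine ((hx t ht).add (hasDerivWithinAt_integral_window hh.le hf ht)).congr
      (fun y _ => hA y) (hA t) |>.congr_deriv ?_
    rw [hQ, sub_add_cancel]
    ring
  have hV' : HasDerivWithinAt V _ (Ici t0) t :=
    ((hA'.pow 2).add ((hasDerivWithinAt_integral_window_integral hh.le hg ht).const_mul
      lam)).congr (fun y _ => hV y) (hV t)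
  refine ⟨_, hV', ?_⟩
  obtain ⟨hq₁, hq₂⟩ := hcond t ht
  have hth : t0 - h ≤ t - h := by linarith
  have htt : t0 - h ≤ t := by linarith
  have hW := integral_window_integral_le (by linarith) (fun u => sq_nonneg (b (u + h) * x u))
    (intervalIntegrable_of_continuousOn_Ici hg hth htt)
  have hI := sq_integral_le_mul_integral_sq (by linarith)
    (intervalIntegrable_of_continuousOn_Ici hf hth htt)
    (intervalIntegrable_of_continuousOn_Ici hg hth htt)
  rw [sub_sub_cancel] at hW hI
  rw [hV t, hA t]
  convert lyapunov_deriv_le_of_bounds (X := x t) hh hlam hq₁ hq₂ hW hI using 1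
  norm_num

theorem stmt10 (t0 h lam : ℝ) (hh : 0 < h) (hlam : 0 < lam)
    (a b x : ℝ → ℝ) (ha : Continuous a) (hb : Continuous b)
    -- x is a solution of the delay differential equation
    (hxc : ContinuousOn x (Set.Ici (t0 - h)))
    (hx : ∀ t, t0 ≤ t → HasDerivWithinAt x (a t * x t + b t * x (t - h)) (Set.Ici t0) t)
    -- the auxiliary functions Q, A, V
    (Q A V : ℝ → ℝ)
    (hQ : ∀ t, Q t = a t + b (t + h))
    (hA : ∀ t, A t = x t + ∫ s in (t - h)..t, b (s + h) * x s)
    (hV : ∀ t, V t = (A t) ^ 2 +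
        lam * ∫ s in (t - h)..t, (∫ u in s..t, (b (u + h)) ^ 2 * (x u) ^ 2))
    -- the condition −λ/(h(1+λ)) ≤ Q(t) ≤ −λ·h·b(t+h)²
    (hcond : ∀ t, t0 ≤ t →
        -lam / (h * (1 + lam)) ≤ Q t ∧ Q t ≤ -lam * h * (b (t + h)) ^ 2) :
    ∀ t, t0 ≤ t → ∃ d, HasDerivWithinAt V d (Set.Ici t0) t ∧ d ≤ Q t * V t :=
  stmt10_general t0 h lam hh hlam a b x hb hxc hx Q A V hQ hA hV hcond
end

section
/- Assume there exists λ > 0 such that −λ/(h + λ(h+1)) ≤ Q(t) ≤ −λ(h+1)·b(t+h)² − Q(t)² for all integers t ≥ t₀. Then along any solution x of the delay difference equation, V(t+1) − V(t) ≤ Q(t)·V(t) for all integers t ≥ t₀. -/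
/-!
Window sums shift as `∑_{t+1-h}^{t} g = ∑_{t-h}^{t-1} g + g t - g (t-h)`. Along a solution this
gives `A (t+1) = A t + Q t * x t`, and the double sum `W` in `V = A² + λ W` grows by
`h b(t+h)² x(t)² - S`, where `S = ∑_{t-h}^{t-1} b(s+h)² x(s)²`. Writing `B = A - x`,
`ΔV - Q V = (Q² + Q + λ h b(t+h)²) x(t)² - Q B² - λ Q W - λ S`.
Cauchy–Schwarz gives `B² ≤ h S`, and `W ≤ h S` trivially, so the last three terms are at most
`(-Q h - λ Q h - λ) S`. The upper condition on `Q` makes the coefficient of `x(t)²` nonpositive,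
the lower one that of `S`.
-/

open Finset

section Window

variable {h : ℤ}

theorem sum_Icc_window_succ {M : Type*} [AddCommGroup M] (g : ℤ → M) (hh : 0 ≤ h) (t : ℤ) :
    ∑ s ∈ Icc (t + 1 - h) t, g s = ∑ s ∈ Icc (t - h) (t - 1), g s + g t - g (t - h) := by
  have htop : ∑ s ∈ Icc (t - h) t, g s = ∑ s ∈ Icc (t - h) (t - 1), g s + g t := by
    rw [← insert_Icc_sub_one_right_eq_Icc (by omega), sum_insert (by simp), add_comm]
  have hbot : ∑ s ∈ Icc (t - h) t, g s = g (t - h) + ∑ s ∈ Icc (t + 1 - h) t, g s := by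
    rw [show t + 1 - h = t - h + 1 by ring, ← insert_Icc_add_one_left_eq_Icc (by omega),
      sum_insert (by simp)]
  rw [← htop, hbot, add_sub_cancel_left]

theorem card_Icc_sub_sub_one (hh : 0 ≤ h) (t : ℤ) : (#(Icc (t - h) (t - 1)) : ℤ) = h := by
  rw [Int.card_Icc, Int.toNat_of_nonneg] <;> omega

theorem sq_sum_Icc_window_le (g : ℤ → ℝ) (hh : 0 ≤ h) (t : ℤ) :
    (∑ s ∈ Icc (t - h) (t - 1), g s) ^ 2 ≤ h * ∑ s ∈ Icc (t - h) (t - 1), g s ^ 2 := by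
  have hcard : (#(Icc (t - h) (t - 1)) : ℝ) = h := by exact_mod_cast card_Icc_sub_sub_one hh t
  simpa only [hcard] using sq_sum_le_card_mul_sum_sq (s := Icc (t - h) (t - 1)) (f := g)

theorem sum_Icc_window_tail_le {f : ℤ → ℝ} (hf : ∀ u, 0 ≤ f u) (hh : 0 ≤ h) (t : ℤ) :
    ∑ s ∈ Icc (t - h) (t - 1), ∑ u ∈ Icc s (t - 1), f u ≤ h * ∑ u ∈ Icc (t - h) (t - 1), f u := by
  have hcard : (#(Icc (t - h) (t - 1)) : ℝ) = h := by exact_mod_cast card_Icc_sub_sub_one hh t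
  rw [← hcard, ← nsmul_eq_mul]
  refine sum_le_card_nsmul _ _ _ fun s hs ↦ sum_le_sum_of_subset_of_nonneg ?_ fun u _ _ ↦ hf u
  exact Icc_subset_Icc_left (mem_Icc.1 hs).1

theorem sum_Icc_window_tail_succ (f : ℤ → ℝ) (hh : 0 ≤ h) (t : ℤ) :
    ∑ s ∈ Icc (t + 1 - h) t, ∑ u ∈ Icc s t, f u =
      ∑ s ∈ Icc (t - h) (t - 1), ∑ u ∈ Icc s (t - 1), f u + h * f t
        - ∑ u ∈ Icc (t - h) (t - 1), f u := by
  have hcard : (#(Icc (t + 1 - h) t) : ℝ) = h := by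
    exact_mod_cast add_sub_cancel_right t 1 ▸ card_Icc_sub_sub_one hh (t + 1)
  have hsplit : ∀ s ∈ Icc (t + 1 - h) t,
      ∑ u ∈ Icc s t, f u = ∑ u ∈ Icc s (t - 1), f u + f t := fun s hs ↦ by
    rw [← insert_Icc_sub_one_right_eq_Icc (mem_Icc.1 hs).2, sum_insert (by simp), add_comm]
  rw [sum_congr rfl hsplit, sum_add_distrib, sum_const, nsmul_eq_mul, hcard,
    sum_Icc_window_succ _ hh, Icc_eq_empty_of_lt (sub_one_lt t), sum_empty]
  ring

end Window

theorem add_sum_Icc_window_succ_of_delay {a b x : ℤ → ℝ} {h t : ℤ} (hh : 0 ≤ h)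
    (hx : x (t + 1) - x t = a t * x t + b t * x (t - h)) :
    x (t + 1) + ∑ s ∈ Icc (t + 1 - h) t, b (s + h) * x s =
      x t + ∑ s ∈ Icc (t - h) (t - 1), b (s + h) * x s + (a t + b (t + h)) * x t := by
  rw [sum_Icc_window_succ _ hh, sub_add_cancel]
  linarith

theorem lyapunov_increment_le {h lam q β ξ B S W : ℝ} (hh : 0 ≤ h) (hlam : 0 < lam)
    (hS : 0 ≤ S) (hB : B ^ 2 ≤ h * S) (hW : W ≤ h * S)
    (hlow : -lam / (h + lam * (h + 1)) ≤ q) (hup : q ≤ -lam * (h + 1) * β ^ 2 - q ^ 2) :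
    (ξ + B + q * ξ) ^ 2 + lam * (W + h * (β ^ 2 * ξ ^ 2) - S) - ((ξ + B) ^ 2 + lam * W)
      ≤ q * ((ξ + B) ^ 2 + lam * W) := by
  have hβ : 0 ≤ lam * β ^ 2 := by positivity
  have hq : q ≤ 0 := by nlinarith [sq_nonneg q]
  have hlq : lam * q ≤ 0 := mul_nonpos_of_nonneg_of_nonpos hlam.le hq
  have hcoefξ : q ^ 2 + q + lam * h * β ^ 2 ≤ 0 := by linarith
  have hcoefS : -(q * h) - lam * q * h - lam ≤ 0 := by
    rw [div_le_iff₀ (by positivity)] at hlow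
    linarith
  rw [← sub_nonpos]
  calc _ = (q ^ 2 + q + lam * h * β ^ 2) * ξ ^ 2 - q * B ^ 2 - lam * q * W - lam * S := by ring
    _ ≤ 0 := by
      linarith [mul_nonpos_of_nonpos_of_nonneg hcoefξ (sq_nonneg ξ),
        mul_le_mul_of_nonpos_left hB hq, mul_le_mul_of_nonneg_left hW (neg_nonneg.2 hlq),
        mul_nonpos_of_nonpos_of_nonneg hcoefS hS]

theorem stmt11 (t0 h : ℤ) (hh : 1 ≤ h) (lam : ℝ) (hlam : 0 < lam)
    (a b x : ℤ → ℝ)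
    -- x is a solution of the delay difference equation
    (hx : ∀ t, t0 ≤ t → x (t + 1) - x t = a t * x t + b t * x (t - h))
    -- the auxiliary functions Q, A, V
    (Q A V : ℤ → ℝ)
    (hQ : ∀ t, Q t = a t + b (t + h))
    (hA : ∀ t, A t = x t + ∑ s ∈ Finset.Icc (t - h) (t - 1), b (s + h) * x s)
    (hV : ∀ t, V t = (A t) ^ 2 +
        lam * ∑ s ∈ Finset.Icc (t - h) (t - 1),
          ∑ u ∈ Finset.Icc s (t - 1), (b (u + h)) ^ 2 * (x u) ^ 2)
    -- the condition −λ/(h + λ(h+1)) ≤ Q(t) ≤ −λ(h+1)·b(t+h)² − Q(t)²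
    (hcond : ∀ t, t0 ≤ t →
        -lam / ((h : ℝ) + lam * ((h : ℝ) + 1)) ≤ Q t ∧
        Q t ≤ -lam * ((h : ℝ) + 1) * (b (t + h)) ^ 2 - (Q t) ^ 2) :
    ∀ t, t0 ≤ t → V (t + 1) - V t ≤ Q t * V t := by
  intro t ht
  have hh0 : 0 ≤ h := by omega
  have hA_succ : A (t + 1) = A t + Q t * x t := by
    rw [hA, hA, hQ, add_sub_cancel_right, add_sum_Icc_window_succ_of_delay hh0 (hx t ht)]
  have hB := sq_sum_Icc_window_le (fun s ↦ b (s + h) * x s) hh0 t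
  simp only [mul_pow] at hB
  rw [hV, hV, hA_succ, hA, add_sub_cancel_right, sum_Icc_window_tail_succ _ hh0]
  exact lyapunov_increment_le (by exact_mod_cast hh0) hlam (sum_nonneg fun _ _ ↦ by positivity)
    hB (sum_Icc_window_tail_le (fun _ ↦ by positivity) hh0 t) (hcond t ht).1 (hcond t ht).2
end

section
/- Assume 1 + a(t) > 0 for all integers t ≥ t₀ and that there exists λ > 0 such that −λ/(1+2λ) ≤ Q(t) ≤ −2λ·b(t+1)² − Q(t)² for all integers t ≥ t₀. Then every solution x satisfies |x(t)| ≤ √( (1 + 1/λ)·V(t₀) ) · exp( (1/2) Σ_{s=t₀}^{t−1} Q(s) ) for all integers t ≥ t₀. -/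
/-!
Write `u = x t` and `w = b t * x (t - 1)`, so that `A t = u + w` and, by the equation,
`A (t + 1) = (1 + Q t) u + w`. Then `(1 + Q t) V t - V (t + 1)` is the diagonal quadratic form
`(Q + λ + λQ) w² - (Q + Q² + λ b(t+1)²) u²`; the lower bound on `Q` makes the first coefficient
nonnegative and the upper bound makes the second nonpositive. Hence `V (t + 1) ≤ (1 + Q t) V t ≤ exp (Q t) V t`, and
`x t² ≤ (1 + 1/λ) V t` closes the estimate.
-/

open Finset Real

lemma lyapunov_step_le {lam q β u w : ℝ} (hlam : 0 < lam)
    (hlow : -lam / (1 + 2 * lam) ≤ q) (hup : q ≤ -2 * lam * β ^ 2 - q ^ 2) :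
    ((1 + q) * u + w) ^ 2 + lam * β ^ 2 * u ^ 2 ≤ (1 + q) * ((u + w) ^ 2 + lam * w ^ 2) := by
  have hq : q ≤ 0 := by nlinarith [sq_nonneg q, sq_nonneg β]
  have hw : 0 ≤ q + lam + lam * q := by
    have := (div_le_iff₀ (by linarith : (0 : ℝ) < 1 + 2 * lam)).mp hlow
    nlinarith
  have hu : q + q ^ 2 + lam * β ^ 2 ≤ 0 := by nlinarith [sq_nonneg β]
  have hdiff : (1 + q) * ((u + w) ^ 2 + lam * w ^ 2) - (((1 + q) * u + w) ^ 2 + lam * β ^ 2 * u ^ 2)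
      = (q + lam + lam * q) * w ^ 2 - (q + q ^ 2 + lam * β ^ 2) * u ^ 2 := by ring
  nlinarith [mul_nonneg hw (sq_nonneg w), mul_nonneg (neg_nonneg.mpr hu) (sq_nonneg u)]

lemma sq_le_one_add_inv_mul {lam : ℝ} (hlam : 0 < lam) (u w : ℝ) :
    u ^ 2 ≤ (1 + 1 / lam) * ((u + w) ^ 2 + lam * w ^ 2) := by
  rw [← sub_nonneg]
  have key : (1 + 1 / lam) * ((u + w) ^ 2 + lam * w ^ 2) - u ^ 2 = (u + (1 + lam) * w) ^ 2 / lam := by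
    field_simp
    ring
  rw [key]
  positivity

lemma le_mul_exp_sum_of_le_one_add_mul {V Q : ℤ → ℝ} {t0 : ℤ} (hV : ∀ t, 0 ≤ V t)
    (hstep : ∀ t, t0 ≤ t → V (t + 1) ≤ (1 + Q t) * V t) :
    ∀ t, t0 ≤ t → V t ≤ V t0 * exp (∑ s ∈ Icc t0 (t - 1), Q s) := by
  intro t ht
  induction t, ht using Int.leInduction with
  | base => simp
  | succ t ht ih =>
    calc V (t + 1) ≤ (1 + Q t) * V t := hstep t ht
      _ ≤ exp (Q t) * (V t0 * exp (∑ s ∈ Icc t0 (t - 1), Q s)) := by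
          gcongr
          · exact hV t
          · linarith [add_one_le_exp (Q t)]
      _ = V t0 * exp (∑ s ∈ Icc t0 (t + 1 - 1), Q s) := by
          rw [add_sub_cancel_right, ← insert_Icc_sub_one_right_eq_Icc ht,
            sum_insert (by simp), exp_add]
          ring

lemma abs_le_sqrt_mul_exp_half {u C S : ℝ} (h : u ^ 2 ≤ C * exp S) :
    |u| ≤ √C * exp (1 / 2 * S) := by
  rw [one_div_mul_eq_div, exp_half, ← sqrt_mul' _ (exp_pos S).le]
  exact abs_le_sqrt h

theorem stmt14_general (t0 : ℤ) (lam : ℝ) (hlam : 0 < lam)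
    (a b x : ℤ → ℝ)
    -- x is a solution of the delay difference equation
    (hx : ∀ t, t0 ≤ t → x (t + 1) - x t = a t * x t + b t * x (t - 1))
    -- the auxiliary functions Q, A, V
    (Q A V : ℤ → ℝ)
    (hQ : ∀ t, Q t = a t + b (t + 1))
    (hA : ∀ t, A t = x t + b t * x (t - 1))
    (hV : ∀ t, V t = (A t) ^ 2 + lam * (b t) ^ 2 * (x (t - 1)) ^ 2)
    -- the condition −λ/(1+2λ) ≤ Q(t) ≤ −2λ·b(t+1)² − Q(t)²
    (hcond : ∀ t, t0 ≤ t →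
        -lam / (1 + 2 * lam) ≤ Q t ∧ Q t ≤ -2 * lam * (b (t + 1)) ^ 2 - (Q t) ^ 2) :
    ∀ t, t0 ≤ t →
      |x t| ≤ Real.sqrt ((1 + 1 / lam) * V t0) *
        Real.exp ((1 / 2) * ∑ s ∈ Finset.Icc t0 (t - 1), Q s) := by
  have hV_nonneg : ∀ t, 0 ≤ V t := fun t => by rw [hV]; positivity
  have hstep : ∀ t, t0 ≤ t → V (t + 1) ≤ (1 + Q t) * V t := by
    intro t ht
    have hA_succ : A (t + 1) = (1 + Q t) * x t + b t * x (t - 1) := by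
      rw [hA, add_sub_cancel_right, hQ]
      linarith [hx t ht]
    rw [hV (t + 1), hV t, hA_succ, add_sub_cancel_right, hA]
    linear_combination lyapunov_step_le (u := x t) (w := b t * x (t - 1)) hlam (hcond t ht).1
      (hcond t ht).2
  intro t ht
  apply abs_le_sqrt_mul_exp_half
  calc x t ^ 2 ≤ (1 + 1 / lam) * V t := by
        rw [hV, hA]
        linear_combination sq_le_one_add_inv_mul hlam (x t) (b t * x (t - 1))
    _ ≤ (1 + 1 / lam) * (V t0 * exp (∑ s ∈ Icc t0 (t - 1), Q s)) := by
        gcongr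
        exact le_mul_exp_sum_of_le_one_add_mul hV_nonneg hstep t ht
    _ = (1 + 1 / lam) * V t0 * exp (∑ s ∈ Icc t0 (t - 1), Q s) := by ring

theorem stmt14 (t0 : ℤ) (lam : ℝ) (hlam : 0 < lam)
    (a b x : ℤ → ℝ)
    (ha : ∀ t, t0 ≤ t → 0 < 1 + a t)
    -- x is a solution of the delay difference equation
    (hx : ∀ t, t0 ≤ t → x (t + 1) - x t = a t * x t + b t * x (t - 1))
    -- the auxiliary functions Q, A, V
    (Q A V : ℤ → ℝ)
    (hQ : ∀ t, Q t = a t + b (t + 1))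
    (hA : ∀ t, A t = x t + b t * x (t - 1))
    (hV : ∀ t, V t = (A t) ^ 2 + lam * (b t) ^ 2 * (x (t - 1)) ^ 2)
    -- the condition −λ/(1+2λ) ≤ Q(t) ≤ −2λ·b(t+1)² − Q(t)²
    (hcond : ∀ t, t0 ≤ t →
        -lam / (1 + 2 * lam) ≤ Q t ∧ Q t ≤ -2 * lam * (b (t + 1)) ^ 2 - (Q t) ^ 2) :
    ∀ t, t0 ≤ t →
      |x t| ≤ Real.sqrt ((1 + 1 / lam) * V t0) *
        Real.exp ((1 / 2) * ∑ s ∈ Finset.Icc t0 (t - 1), Q s) :=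
  stmt14_general t0 lam hlam a b x hx Q A V hQ hA hV hcond
end

section
/- Let λ > 0 and define η(t) := exp( ∫_{t₀}^{t} a(u) du ) / ( 1 + λ ∫_{t−h}^{t} exp( ∫_{t₀}^{s+h} a(u) du ) ds ) and γ(t) := a(t) + λ·η(t). Suppose that |b(t)| ≤ λ·η(t) for all t ≥ t₀. Then every solution x with x = ψ on [t₀−h, t₀] satisfies |x(t)| ≤ V₀ · exp( ∫_{t₀}^{t} γ(s) ds ) for all t ≥ t₀, where V₀ := |x(t₀)| + λ·η(t₀) ∫_{t₀−h}^{t₀} |x(s)| ds. -/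
/-!
Put `μ = λ η`. The quotient `η = E / N`, with `E t = exp ∫_{t₀}^t a`, satisfies the Riccati
inequality `η' ≤ (a + λ η) η`, the defect being `λ E(t) E(t + h) / N(t)²`. Hence the Lyapunov
functional `V t = |x t| + μ t ∫_{t-h}^t |x|` has right derivative at most
`a |x t| + |b t| |x (t - h)| + μ' ∫_{t-h}^t |x| + μ (|x t| - |x (t - h)|) ≤ γ V`,
because `|b| ≤ μ` cancels the delayed term. A Gronwall argument for right derivatives then
gives `|x t| ≤ V t ≤ V t₀ exp ∫_{t₀}^t γ`.
-/

open Set Real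

theorem hasDerivAt_integral_sub_const_self {g : ℝ → ℝ} (hg : Continuous g) (h t : ℝ) :
    HasDerivAt (fun u => ∫ s in (u - h)..u, g s) (g t - g (t - h)) t := by
  have hlower : HasDerivAt (fun u => ∫ s in (0 : ℝ)..(u - h), g s) (g (t - h)) t := by
    simpa [Function.comp_def] using (hg.integral_hasStrictDerivAt 0 (t - h)).hasDerivAt.comp t
      ((hasDerivAt_id t).sub_const h)
  refine ((hg.integral_hasStrictDerivAt 0 t).hasDerivAt.sub hlower).congr_of_eventuallyEq
    (.of_forall fun u => ?_)
  exact (intervalIntegral.integral_interval_sub_left (hg.intervalIntegrable _ _)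
    (hg.intervalIntegrable _ _)).symm

theorem HasDerivWithinAt.exists_hasDerivWithinAt_abs_Ici_le {f : ℝ → ℝ} {c r u : ℝ}
    (hf : HasDerivWithinAt f (c * f u + r) (Ici u) u) :
    ∃ d ≤ c * |f u| + |r|, HasDerivWithinAt (fun v => |f v|) d (Ici u) u := by
  have hcont := hf.continuousWithinAt
  rcases lt_trichotomy (f u) 0 with hneg | hzero | hpos
  · refine ⟨-(c * f u + r), ?_, hf.neg.congr_of_eventuallyEq ?_ (abs_of_neg hneg)⟩
    · rw [abs_of_neg hneg]
      linarith [neg_le_abs r]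
    · filter_upwards [hcont.eventually_lt continuousWithinAt_const hneg] with v hv
      exact abs_of_neg hv
  · refine ⟨|r|, by simp [hzero], ?_⟩
    rw [← hasDerivWithinAt_Ioi_iff_Ici, hasDerivWithinAt_iff_tendsto_slope' self_notMem_Ioi]
      at hf ⊢
    rw [hzero, mul_zero, zero_add] at hf
    refine hf.abs.congr' ?_
    filter_upwards [self_mem_nhdsWithin] with v hv
    simp [slope_def_field, hzero, abs_div, abs_of_pos (sub_pos.2 (mem_Ioi.1 hv))]
  · refine ⟨c * f u + r, ?_, hf.congr_of_eventuallyEq ?_ (abs_of_pos hpos)⟩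
    · rw [abs_of_pos hpos]
      linarith [le_abs_self r]
    · filter_upwards [continuousWithinAt_const.eventually_lt hcont hpos] with v hv
      exact abs_of_pos hv

theorem le_mul_exp_integral_of_hasDerivWithinAt_Ici {V γ : ℝ → ℝ} {t₀ t₁ : ℝ}
    (hV : ContinuousOn V (Icc t₀ t₁)) (hγ : Continuous γ)
    (hV' : ∀ u ∈ Ico t₀ t₁, ∃ v ≤ γ u * V u, HasDerivWithinAt V v (Ici u) u) :
    ∀ u ∈ Icc t₀ t₁, V u ≤ V t₀ * exp (∫ s in t₀..u, γ s) := by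
  choose! V' hV'le hV'd using hV'
  set Γ : ℝ → ℝ := fun u => ∫ s in t₀..u, γ s
  have hΓ : ∀ u, HasDerivAt Γ (γ u) u := fun u =>
    (hγ.integral_hasStrictDerivAt t₀ u).hasDerivAt
  have hΓc : Continuous Γ := continuous_iff_continuousAt.2 fun u => (hΓ u).continuousAt
  -- `V · exp (-Γ)` is nonincreasing
  have hW := image_le_of_deriv_right_le_deriv_boundary (a := t₀) (b := t₁)
    (f := fun u => V u * exp (-Γ u)) (B := fun _ => V t₀) (B' := 0)
    (hV.mul hΓc.neg.rexp.continuousOn)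
    (fun u hu => (hV'd u hu).mul (hΓ u).neg.exp.hasDerivWithinAt)
    (by simp [Γ]) continuousOn_const (fun _ _ => hasDerivWithinAt_const _ _ _)
    (fun u hu => by
      have := mul_le_mul_of_nonneg_right (hV'le u hu) (exp_pos (-Γ u)).le
      simp only [Pi.zero_apply, Pi.neg_apply]
      linarith)
  intro u hu
  calc V u = V u * exp (-Γ u) * exp (Γ u) := by
        rw [mul_assoc, ← exp_add, neg_add_cancel, exp_zero, mul_one]
    _ ≤ V t₀ * exp (Γ u) := mul_le_mul_of_nonneg_right (hW hu) (exp_pos _).le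

theorem one_add_mul_integral_exp_pos {h lam : ℝ} (hh : 0 ≤ h) (hlam : 0 ≤ lam) (g : ℝ → ℝ)
    (t : ℝ) : 0 < 1 + lam * ∫ s in (t - h)..t, exp (g s) := by
  have : 0 ≤ ∫ s in (t - h)..t, exp (g s) :=
    intervalIntegral.integral_nonneg (by linarith) fun s _ => (exp_pos (g s)).le
  positivity

/-- The weight `η` of the statement. -/
noncomputable def delayWeight (a : ℝ → ℝ) (t₀ h lam t : ℝ) : ℝ :=
  exp (∫ u in t₀..t, a u) / (1 + lam * ∫ s in (t - h)..t, exp (∫ u in t₀..(s + h), a u))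

theorem delayWeight_pos (a : ℝ → ℝ) {t₀ h lam : ℝ} (hh : 0 ≤ h) (hlam : 0 ≤ lam) (t : ℝ) :
    0 < delayWeight a t₀ h lam t :=
  div_pos (exp_pos _) (one_add_mul_integral_exp_pos hh hlam _ t)

theorem exists_hasDerivAt_delayWeight_le {a : ℝ → ℝ} (ha : Continuous a) {t₀ h lam : ℝ}
    (hh : 0 ≤ h) (hlam : 0 ≤ lam) (t : ℝ) :
    ∃ η' ≤ (a t + lam * delayWeight a t₀ h lam t) * delayWeight a t₀ h lam t,
      HasDerivAt (delayWeight a t₀ h lam) η' t := by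
  set E : ℝ → ℝ := fun t => exp (∫ u in t₀..t, a u)
  have hE : ∀ t, HasDerivAt E (E t * a t) t := fun t =>
    (ha.integral_hasStrictDerivAt t₀ t).hasDerivAt.exp
  have hEc : Continuous E := continuous_iff_continuousAt.2 fun t => (hE t).continuousAt
  set N : ℝ → ℝ := fun t => 1 + lam * ∫ s in (t - h)..t, E (s + h)
  have hN : HasDerivAt N (lam * (E (t + h) - E t)) t := by
    have := ((hasDerivAt_integral_sub_const_self (hEc.comp (continuous_add_const h)) h
      t).const_mul lam).const_add 1
    rwa [Function.comp_apply, Function.comp_apply, sub_add_cancel] at this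
  have hNpos : 0 < N t := one_add_mul_integral_exp_pos hh hlam _ t
  refine ⟨_, ?_, (hE t).div hN hNpos.ne'⟩
  have hgap : 0 ≤ lam * E t * E (t + h) / N t ^ 2 := by positivity
  change _ ≤ (a t + lam * (E t / N t)) * (E t / N t)
  calc (E t * a t * N t - E t * (lam * (E (t + h) - E t))) / N t ^ 2
      = (a t + lam * (E t / N t)) * (E t / N t) - lam * E t * E (t + h) / N t ^ 2 := by
        field_simp
        ring
    _ ≤ (a t + lam * (E t / N t)) * (E t / N t) := sub_le_self _ hgap

theorem abs_le_mul_exp_integral_of_delay_of_continuous {a b μ y : ℝ → ℝ} {t₀ h : ℝ} (hh : 0 ≤ h)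
    (ha : Continuous a) (hy : Continuous y)
    (hμ : ∀ t, ∃ μ' ≤ (a t + μ t) * μ t, HasDerivAt μ μ' t)
    (hμ₀ : ∀ t, t₀ ≤ t → 0 ≤ μ t) (hbμ : ∀ t, t₀ ≤ t → |b t| ≤ μ t)
    (hyd : ∀ t, t₀ ≤ t → HasDerivWithinAt y (a t * y t + b t * y (t - h)) (Ici t) t) :
    ∀ t, t₀ ≤ t → |y t| ≤ (|y t₀| + μ t₀ * ∫ s in (t₀ - h)..t₀, |y s|) *
      exp (∫ s in t₀..t, (a s + μ s)) := by
  choose μ' hμ'le hμ' using hμ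
  have hμc : Continuous μ := continuous_iff_continuousAt.2 fun t => (hμ' t).continuousAt
  set I : ℝ → ℝ := fun u => ∫ s in (u - h)..u, |y s|
  have hI : ∀ u, HasDerivAt I (|y u| - |y (u - h)|) u :=
    hasDerivAt_integral_sub_const_self hy.abs h
  have hIc : Continuous I := continuous_iff_continuousAt.2 fun u => (hI u).continuousAt
  have hI₀ : ∀ u, 0 ≤ I u := fun u =>
    intervalIntegral.integral_nonneg (by linarith) fun _ _ => abs_nonneg _
  set V : ℝ → ℝ := fun u => |y u| + μ u * I u
  intro t ht
  have hV' : ∀ u ∈ Ico t₀ t, ∃ v ≤ (a u + μ u) * V u, HasDerivWithinAt V v (Ici u) u := by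
    intro u hu
    obtain ⟨d, hd, hyd'⟩ := (hyd u hu.1).exists_hasDerivWithinAt_abs_Ici_le
    refine ⟨_, ?_, hyd'.add ((hμ' u).mul (hI u)).hasDerivWithinAt⟩
    have hμI := mul_le_mul_of_nonneg_right (hμ'le u) (hI₀ u)
    have hb : |b u * y (u - h)| ≤ μ u * |y (u - h)| := by
      rw [abs_mul]
      exact mul_le_mul_of_nonneg_right (hbμ u hu.1) (abs_nonneg _)
    simp only [V]
    linarith
  calc |y t| ≤ V t := le_add_of_nonneg_right (mul_nonneg (hμ₀ t ht) (hI₀ t))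
    _ ≤ V t₀ * exp (∫ s in t₀..t, (a s + μ s)) :=
      le_mul_exp_integral_of_hasDerivWithinAt_Ici (hy.abs.add (hμc.mul hIc)).continuousOn
        (ha.add hμc) hV' t ⟨ht, le_rfl⟩

theorem abs_le_mul_exp_integral_of_delay {a b μ x : ℝ → ℝ} {t₀ h : ℝ} (hh : 0 ≤ h)
    (ha : Continuous a) (hμ : ∀ t, ∃ μ' ≤ (a t + μ t) * μ t, HasDerivAt μ μ' t)
    (hμ₀ : ∀ t, t₀ ≤ t → 0 ≤ μ t) (hbμ : ∀ t, t₀ ≤ t → |b t| ≤ μ t)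
    (hxc : ContinuousOn x (Ici (t₀ - h)))
    (hx : ∀ t, t₀ ≤ t → HasDerivWithinAt x (a t * x t + b t * x (t - h)) (Ici t₀) t) :
    ∀ t, t₀ ≤ t → |x t| ≤ (|x t₀| + μ t₀ * ∫ s in (t₀ - h)..t₀, |x s|) *
      exp (∫ s in t₀..t, (a s + μ s)) := by
  set y : ℝ → ℝ := fun s => x (max s (t₀ - h))
  have hyx : ∀ s, t₀ - h ≤ s → y s = x s := fun s hs => congrArg x (max_eq_left hs)
  have hy : Continuous y :=
    hxc.comp_continuous (continuous_id.max continuous_const) fun s => mem_Ici.2 (le_max_right _ _)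
  have hyd : ∀ t, t₀ ≤ t → HasDerivWithinAt y (a t * y t + b t * y (t - h)) (Ici t) t := by
    intro t ht
    rw [hyx t (by linarith), hyx (t - h) (by linarith)]
    exact ((hx t ht).mono (Ici_subset_Ici.2 ht)).congr
      (fun s hs => hyx s (by linarith [mem_Ici.1 hs])) (hyx t (by linarith))
  have hint : ∫ s in (t₀ - h)..t₀, |y s| = ∫ s in (t₀ - h)..t₀, |x s| :=
    intervalIntegral.integral_congr fun s hs => by
      rw [uIcc_of_le (by linarith)] at hs
      simp only [hyx s hs.1]
  intro t ht
  have key := abs_le_mul_exp_integral_of_delay_of_continuous hh ha hy hμ hμ₀ hbμ hyd t ht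
  rwa [hint, hyx t (by linarith), hyx t₀ (by linarith)] at key

theorem stmt17_general (t0 h lam : ℝ) (hh : 0 < h) (hlam : 0 < lam)
    (a b x : ℝ → ℝ) (ha : Continuous a)
    -- x is a solution of the delay differential equation with initial function ψ
    (hxc : ContinuousOn x (Set.Ici (t0 - h)))
    (hx : ∀ t, t0 ≤ t → HasDerivWithinAt x (a t * x t + b t * x (t - h)) (Set.Ici t0) t)
    -- the auxiliary functions η and γ
    (η γ : ℝ → ℝ)
    (hη : ∀ t, η t = Real.exp (∫ u in t0..t, a u) /
        (1 + lam * ∫ s in (t - h)..t, Real.exp (∫ u in t0..(s + h), a u)))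
    (hγ : ∀ t, γ t = a t + lam * η t)
    -- the condition |b(t)| ≤ λ·η(t)
    (hbη : ∀ t, t0 ≤ t → |b t| ≤ lam * η t) :
    ∀ t, t0 ≤ t →
      |x t| ≤ (|x t0| + lam * η t0 * ∫ s in (t0 - h)..t0, |x s|) *
        Real.exp (∫ s in t0..t, γ s) := by
  obtain rfl : η = delayWeight a t0 h lam := funext hη
  obtain rfl : γ = fun t => a t + lam * delayWeight a t0 h lam t := funext hγ
  refine abs_le_mul_exp_integral_of_delay hh.le ha (fun t => ?_)
    (fun t _ => (mul_pos hlam (delayWeight_pos a hh.le hlam.le t)).le) hbη hxc hx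
  obtain ⟨η', hη', hd⟩ := exists_hasDerivAt_delayWeight_le ha (t₀ := t0) hh.le hlam.le t
  exact ⟨lam * η', by linarith [mul_le_mul_of_nonneg_left hη' hlam.le], hd.const_mul lam⟩

theorem stmt17 (t0 h lam : ℝ) (hh : 0 < h) (hlam : 0 < lam)
    (a b x ψ : ℝ → ℝ) (ha : Continuous a) (hb : Continuous b)
    -- x is a solution of the delay differential equation with initial function ψ
    (hxc : ContinuousOn x (Set.Ici (t0 - h)))
    (hx : ∀ t, t0 ≤ t → HasDerivWithinAt x (a t * x t + b t * x (t - h)) (Set.Ici t0) t)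
    (hψ : ContinuousOn ψ (Set.Icc (t0 - h) t0))
    (hinit : ∀ t ∈ Set.Icc (t0 - h) t0, x t = ψ t)
    -- the auxiliary functions η and γ
    (η γ : ℝ → ℝ)
    (hη : ∀ t, η t = Real.exp (∫ u in t0..t, a u) /
        (1 + lam * ∫ s in (t - h)..t, Real.exp (∫ u in t0..(s + h), a u)))
    (hγ : ∀ t, γ t = a t + lam * η t)
    -- the condition |b(t)| ≤ λ·η(t)
    (hbη : ∀ t, t0 ≤ t → |b t| ≤ lam * η t) :
    ∀ t, t0 ≤ t →
      |x t| ≤ (|x t0| + lam * η t0 * ∫ s in (t0 - h)..t0, |x s|) *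
        Real.exp (∫ s in t0..t, γ s) :=
  stmt17_general t0 h lam hh hlam a b x ha hxc hx η γ hη hγ hbη
end
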